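/- arXiv:2501.08679 — 10 statements merged into one kernel-verified Lean document; each statement's English description precedes it below -/
import Mathlib

section
/- Perturbation bound for the perturbed two-layer dynamics: let t₀ ≥ 0 and suppose |h(t)| ≤ κ for all t ≥ t₀, where κ > 0. Then (i) if t₀ ≤ s ≤ t and |z − θ(u)| ≥ κ for all u ∈ [s, t], then |z − θ(t)| ≤ |z − θ(s)| (i.e. |z − θ| is non-increasing while it stays ≥ κ); and (ii) if |z − θ(t₁)| ≤ κ for some t₁ ≥ t₀, then |z − θ(t)| ≤ κ for all t ≥ t₁. -/
/-!
Along the flow, the squared residual `r = z - aβ` satisfies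
`(r²)' = -2 (a² + β²) r (r + h)`, which is `≤ 0` whenever `|h| ≤ |r|`; this gives (i).
For (ii), if `|r|` rose above `κ` after `t₁`, it would do so after a last time at which
`|r| ≤ κ`, and from there on (i) forbids it to grow.
-/

open Set

theorem mul_add_nonneg_of_abs_le {x y : ℝ} (hyx : |y| ≤ |x|) : 0 ≤ x * (x + y) := by
  nlinarith [sq_abs x, abs_mul x y, neg_abs_le (x * y), abs_nonneg x]

theorem ContinuousOn.le_right_of_le_left_of_antitone_above {g : ℝ → ℝ} {κ a b : ℝ}
    (hab : a ≤ b) (hg : ContinuousOn g (Icc a b))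
    (hanti : ∀ s ∈ Icc a b, (∀ u ∈ Icc s b, κ ≤ g u) → g b ≤ g s) (ha : g a ≤ κ) :
    g b ≤ κ := by
  have hclosed : IsClosed ({u | g u ≤ κ} ∩ Icc a b) := by
    rw [inter_comm]
    exact isClosed_Icc.isClosed_le hg continuousOn_const
  refine hclosed.mem_of_ge_of_forall_exists_gt ha hab fun x ⟨hx, hxa, hxb⟩ => ?_
  by_contra hempty
  have habove : ∀ u ∈ Ioc x b, κ < g u := fun u hu => by
    by_contra hle
    exact hempty ⟨u, not_lt.mp hle, hu⟩
  have hxκ : κ ≤ g x :=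
    ContinuousWithinAt.closure_le (by rw [closure_Ioc hxb.ne]; exact left_mem_Icc.2 hxb.le)
      continuousWithinAt_const ((hg x ⟨hxa, hxb.le⟩).mono (Ioc_subset_Icc_self.trans
        (Icc_subset_Icc_left hxa))) fun u hu => (habove u hu).le
  have hend : g b ≤ κ := by
    refine (hanti x ⟨hxa, hxb.le⟩ fun u hu => ?_).trans hx
    rcases hu.1.eq_or_lt with rfl | hxu
    · exact hxκ
    · exact (habove u ⟨hxu, hu.2⟩).le
  exact hempty ⟨b, hend, hxb, le_rfl⟩

section TwoLayer

variable {z : ℝ} {h a β : ℝ → ℝ}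

theorem hasDerivWithinAt_residual_sq {s : Set ℝ} {t : ℝ}
    (hβ : HasDerivWithinAt β (a t * (z - a t * β t + h t)) s t)
    (ha : HasDerivWithinAt a (β t * (z - a t * β t + h t)) s t) :
    HasDerivWithinAt (fun u => (z - a u * β u) ^ 2)
      (-2 * (a t ^ 2 + β t ^ 2) * ((z - a t * β t) * (z - a t * β t + h t))) s t := by
  refine (((hasDerivWithinAt_const t s z).sub (ha.mul hβ)).fun_pow 2).congr_deriv ?_
  simp only [Pi.sub_apply, Pi.mul_apply]
  ring

theorem continuousOn_residual
    (hode : ∀ t ∈ Ici (0 : ℝ),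
      HasDerivWithinAt β (a t * (z - a t * β t + h t)) (Ici 0) t ∧
      HasDerivWithinAt a (β t * (z - a t * β t + h t)) (Ici 0) t) :
    ContinuousOn (fun u => z - a u * β u) (Ici 0) :=
  continuousOn_const.sub <| ContinuousOn.mul
    (fun t ht => (hode t ht).2.continuousWithinAt) fun t ht => (hode t ht).1.continuousWithinAt

theorem abs_residual_le_of_abs_perturbation_le
    (hode : ∀ t ∈ Ici (0 : ℝ),
      HasDerivWithinAt β (a t * (z - a t * β t + h t)) (Ici 0) t ∧
      HasDerivWithinAt a (β t * (z - a t * β t + h t)) (Ici 0) t)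
    {s t : ℝ} (hs : 0 ≤ s) (hst : s ≤ t)
    (hdom : ∀ u ∈ Icc s t, |h u| ≤ |z - a u * β u|) :
    |z - a t * β t| ≤ |z - a s * β s| := by
  have hsub : Icc s t ⊆ Ici 0 := fun u hu => hs.trans hu.1
  have hanti : AntitoneOn (fun u => (z - a u * β u) ^ 2) (Icc s t) := by
    refine antitoneOn_of_hasDerivWithinAt_nonpos (convex_Icc s t)
      (f' := fun u => -2 * (a u ^ 2 + β u ^ 2) * ((z - a u * β u) * (z - a u * β u + h u)))
      (((continuousOn_residual hode).mono hsub).pow 2) (fun u hu => ?_) fun u hu => ?_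
    · rw [interior_Icc] at hu ⊢
      have hu0 : u ∈ Ici (0 : ℝ) := hs.trans hu.1.le
      exact (hasDerivWithinAt_residual_sq (hode u hu0).1 (hode u hu0).2).mono
        (Ioo_subset_Icc_self.trans hsub)
    · rw [interior_Icc] at hu
      have := mul_add_nonneg_of_abs_le (hdom u (Ioo_subset_Icc_self hu))
      nlinarith [sq_nonneg (a u), sq_nonneg (β u)]
  exact sq_le_sq.mp (hanti ⟨le_rfl, hst⟩ ⟨hst, le_rfl⟩ hst)

end TwoLayer

theorem stmt_0_general (z κ t₀ : ℝ) (h a β : ℝ → ℝ)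
    (hode : ∀ t ∈ Ici (0 : ℝ),
      HasDerivWithinAt β (a t * (z - a t * β t + h t)) (Ici 0) t ∧
      HasDerivWithinAt a (β t * (z - a t * β t + h t)) (Ici 0) t)
    (ht₀ : 0 ≤ t₀) (hhb : ∀ t, t₀ ≤ t → |h t| ≤ κ) :
    (∀ s t : ℝ, t₀ ≤ s → s ≤ t →
        (∀ u ∈ Icc s t, κ ≤ |z - a u * β u|) →
        |z - a t * β t| ≤ |z - a s * β s|) ∧
    (∀ t₁ : ℝ, t₀ ≤ t₁ → |z - a t₁ * β t₁| ≤ κ →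
        ∀ t : ℝ, t₁ ≤ t → |z - a t * β t| ≤ κ) := by
  have decreasing : ∀ s t : ℝ, t₀ ≤ s → s ≤ t →
      (∀ u ∈ Icc s t, κ ≤ |z - a u * β u|) → |z - a t * β t| ≤ |z - a s * β s| :=
    fun s t hs hst hκr => abs_residual_le_of_abs_perturbation_le hode (ht₀.trans hs) hst
      fun u hu => (hhb u (hs.trans hu.1)).trans (hκr u hu)
  refine ⟨decreasing, fun t₁ ht₁ hr₁ t ht => ?_⟩
  refine ContinuousOn.le_right_of_le_left_of_antitone_above (g := fun u => |z - a u * β u|) ht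
    ((continuousOn_residual hode).abs.mono fun u hu => (ht₀.trans ht₁).trans hu.1)
    (fun s hs => decreasing s t (ht₁.trans hs.1) hs.2) hr₁

/-- Perturbation bound for the perturbed two-layer dynamics:
`|z - θ|` is non-increasing while it stays `≥ κ`, and once `≤ κ` it stays `≤ κ`. -/
theorem stmt_0 (lam z κ t₀ : ℝ) (h a β : ℝ → ℝ)
    (hlam : 0 < lam) (hh : ContinuousOn h (Ici 0))
    (ha0 : a 0 = Real.sqrt lam) (hβ0 : β 0 = 0)
    (hode : ∀ t ∈ Ici (0 : ℝ),
      HasDerivWithinAt β (a t * (z - a t * β t + h t)) (Ici 0) t ∧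
      HasDerivWithinAt a (β t * (z - a t * β t + h t)) (Ici 0) t)
    (hκ : 0 < κ) (ht₀ : 0 ≤ t₀) (hhb : ∀ t, t₀ ≤ t → |h t| ≤ κ) :
    (∀ s t : ℝ, t₀ ≤ s → s ≤ t →
        (∀ u ∈ Icc s t, κ ≤ |z - a u * β u|) →
        |z - a t * β t| ≤ |z - a s * β s|) ∧
    (∀ t₁ : ℝ, t₀ ≤ t₁ → |z - a t₁ * β t₁| ≤ κ →
        ∀ t : ℝ, t₁ ≤ t → |z - a t * β t| ≤ κ) :=
  stmt_0_general z κ t₀ h a β hode ht₀ hhb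
end

section
/- Approaching from below (large κ) for the perturbed two-layer dynamics: assume z ≥ 0, let t₀ ≥ 0, suppose |h(t)| ≤ κ for all t ≥ t₀ for some κ > 0, and suppose z − M ≤ θ(t₀) ≤ z for some M ≥ 0. Then |z − θ(t)| ≤ 2κ for all t ≥ t₀ + T̄, where T̄ = κ⁻¹ [2 + (1/2) ln⁺(M/λ) + (1/2) ln⁺((z − 2κ)/λ)]. -/
open Real Set

/-!
Along the dynamics, `a² - β² = λ` is conserved, so `a² + β² = √(λ² + 4θ²)` and
`ψ := arsinh (2θ/λ)` obeys `ψ' = 2 (z - θ + h)`, while `θ' = (a² + β²)(z - θ + h)` has the sign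
of `z - θ + h`. Hence the band `θ ≤ z + 2κ` is never left after `t₀`, nor is `θ ≥ z - 2κ` once
entered; and as long as `θ < z - 2κ`, `ψ` grows at rate at least `2κ`. Since
`arsinh (2u) ≤ 2 + ln⁺ u`, `ψ` needs at most time `T̄` to climb from `ψ(t₀) ≥ -arsinh (2M/λ)`
to `arsinh (2(z - 2κ)/λ)`.
-/

theorem Real.arsinh_two_mul_le (u : ℝ) : arsinh (2 * u) ≤ 2 + max (log u) 0 := by
  set L := max (log u) 0
  have hL : 1 ≤ exp L := one_le_exp (le_max_right _ _)
  have hLu : u ≤ exp L := (le_exp_log u).trans (exp_le_exp.2 (le_max_left _ _))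
  have he : 5 ≤ exp 2 := by linarith [quadratic_le_exp_of_nonneg (zero_le_two (α := ℝ))]
  have hinv : exp (-(2 + L)) ≤ 1 := exp_le_one_iff.2 (by linarith [le_max_right (log u) 0])
  rw [← arsinh_sinh (2 + L), arsinh_le_arsinh, sinh_eq, exp_add]
  nlinarith

theorem le_of_hasDerivWithinAt_Ici_of_eq_imp_neg {f f' : ℝ → ℝ} {s C : ℝ}
    (hf : ∀ t ∈ Ici s, HasDerivWithinAt f (f' t) (Ici s) t) (hs : f s ≤ C)
    (hC : ∀ t ∈ Ici s, f t = C → f' t < 0) : ∀ t ∈ Ici s, f t ≤ C := fun _ ht =>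
  image_le_of_deriv_right_lt_deriv_boundary' (B := fun _ => C) (B' := fun _ => 0)
    (fun x hx => (hf x hx.1).continuousWithinAt.mono Icc_subset_Ici_self)
    (fun x hx => (hf x hx.1).mono (Ici_subset_Ici.2 hx.1)) hs continuousOn_const
    (fun x _ => hasDerivWithinAt_const x _ C) (fun x hx => hC x hx.1) (right_mem_Icc.2 ht)

theorem add_mul_sub_le_of_le_hasDerivWithinAt_Ici {f f' : ℝ → ℝ} {s b m : ℝ}
    (hf : ∀ t ∈ Ici s, HasDerivWithinAt f (f' t) (Ici s) t) (hm : ∀ t ∈ Ico s b, m ≤ f' t) :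
    ∀ t ∈ Icc s b, f s + m * (t - s) ≤ f t := by
  refine image_le_of_deriv_right_le_deriv_boundary (f' := fun _ => m)
    (by fun_prop) (fun x _ => ?_) (by simp)
    (fun x hx => (hf x hx.1).continuousWithinAt.mono Icc_subset_Ici_self)
    (fun x hx => (hf x hx.1).mono (Ici_subset_Ici.2 hx.1)) hm
  simpa using ((hasDerivWithinAt_id x (Ici x)).sub_const s).const_mul m |>.const_add (f s)

section Relaxation

variable {θ S h : ℝ → ℝ} {z κ s : ℝ}

theorem le_add_of_relaxation
    (hθ : ∀ t ∈ Ici s, HasDerivWithinAt θ (S t * (z - θ t + h t)) (Ici s) t)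
    (hS : ∀ t ∈ Ici s, 0 < S t) (hh : ∀ t ∈ Ici s, h t < κ) (hs : θ s ≤ z + κ) :
    ∀ t ∈ Ici s, θ t ≤ z + κ :=
  le_of_hasDerivWithinAt_Ici_of_eq_imp_neg hθ hs fun t ht hθt =>
    mul_neg_of_pos_of_neg (hS t ht) (by linarith [hh t ht])

theorem sub_le_of_relaxation
    (hθ : ∀ t ∈ Ici s, HasDerivWithinAt θ (S t * (z - θ t + h t)) (Ici s) t)
    (hS : ∀ t ∈ Ici s, 0 < S t) (hh : ∀ t ∈ Ici s, -κ < h t) (hs : z - κ ≤ θ s) :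
    ∀ t ∈ Ici s, z - κ ≤ θ t := by
  have hneg := le_add_of_relaxation (θ := -θ) (h := -h) (z := -z) (κ := κ)
    (fun t ht => ((hθ t ht).neg).congr_deriv (by simp only [Pi.neg_apply]; ring)) hS
    (fun t ht => by simp only [Pi.neg_apply]; linarith [hh t ht])
    (by simp only [Pi.neg_apply]; linarith)
  intro t ht
  have := hneg t ht
  simp only [Pi.neg_apply] at this
  linarith

theorem sub_le_of_relaxation_of_progress
    (hθ : ∀ t ∈ Ici s, HasDerivWithinAt θ (S t * (z - θ t + h t)) (Ici s) t)
    (hS : ∀ t ∈ Ici s, 0 < S t) (hκ : 0 < κ) (hh : ∀ t ∈ Ici s, |h t| ≤ κ) {ψ : ℝ → ℝ}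
    {c T : ℝ} (hψ : ∀ t ∈ Ici s, HasDerivWithinAt ψ (2 * (z - θ t + h t)) (Ici s) t)
    (hψc : ∀ t, θ t < z - 2 * κ → ψ t < c) (hsT : s ≤ T)
    (hc : c ≤ ψ s + 2 * κ * (T - s)) :
    ∀ t, T ≤ t → z - 2 * κ ≤ θ t := by
  intro t ht
  by_contra! hlt
  have hbelow (u : ℝ) (hu : u ∈ Icc s t) : θ u < z - 2 * κ := by
    by_contra! hge
    have hsu : Ici u ⊆ Ici s := Ici_subset_Ici.2 hu.1
    exact hlt.not_ge <| sub_le_of_relaxation (κ := 2 * κ) (fun v hv => (hθ v (hsu hv)).mono hsu)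
      (fun v hv => hS v (hsu hv)) (fun v hv => by linarith [(abs_le.1 (hh v (hsu hv))).1])
      hge t hu.2
  have hgrowth := add_mul_sub_le_of_le_hasDerivWithinAt_Ici (m := 2 * κ) hψ
    (fun u hu => by linarith [hbelow u ⟨hu.1, hu.2.le.trans ht⟩, (abs_le.1 (hh u hu.1)).1])
    T ⟨hsT, le_rfl⟩
  linarith [hψc T (hbelow T ⟨hsT, ht⟩)]

end Relaxation

section TwoLayer

variable {a β g : ℝ → ℝ} {s : Set ℝ} {t : ℝ}

theorem hasDerivWithinAt_mul_of_twoLayer (ha : HasDerivWithinAt a (β t * g t) s t)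
    (hβ : HasDerivWithinAt β (a t * g t) s t) :
    HasDerivWithinAt (fun u => a u * β u) ((a t * a t + β t * β t) * g t) s t :=
  (ha.fun_mul hβ).congr_deriv (by ring)

theorem hasDerivWithinAt_mul_self_sub_mul_self_of_twoLayer
    (ha : HasDerivWithinAt a (β t * g t) s t) (hβ : HasDerivWithinAt β (a t * g t) s t) :
    HasDerivWithinAt (fun u => a u * a u - β u * β u) 0 s t :=
  ((ha.fun_mul ha).fun_sub (hβ.fun_mul hβ)).congr_deriv (by ring)

theorem mul_self_sub_mul_self_eq_of_twoLayer
    (ha : ∀ t ∈ Ici (0 : ℝ), HasDerivWithinAt a (β t * g t) (Ici 0) t)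
    (hβ : ∀ t ∈ Ici (0 : ℝ), HasDerivWithinAt β (a t * g t) (Ici 0) t) :
    ∀ t ∈ Ici (0 : ℝ), a t * a t - β t * β t = a 0 * a 0 - β 0 * β 0 := by
  have hderiv := fun t ht => hasDerivWithinAt_mul_self_sub_mul_self_of_twoLayer (ha t ht) (hβ t ht)
  exact fun t ht => constant_of_has_deriv_right_zero
    (fun x hx => (hderiv x hx.1).continuousWithinAt.mono Icc_subset_Ici_self)
    (fun x hx => (hderiv x hx.1).mono (Ici_subset_Ici.2 hx.1)) t (right_mem_Icc.2 ht)

/-- With `λ := a² - β²`, one has `a² + β² = λ √(1 + (2θ/λ)²)`, which cancels the factor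
`a² + β²` in `θ'`. -/
theorem hasDerivWithinAt_arsinh_of_twoLayer {lam : ℝ} (hlam : 0 < lam)
    (hcons : a t * a t - β t * β t = lam) (ha : HasDerivWithinAt a (β t * g t) s t)
    (hβ : HasDerivWithinAt β (a t * g t) s t) :
    HasDerivWithinAt (fun u => arsinh (2 * (a u * β u / lam))) (2 * g t) s t := by
  have hS : 0 < a t * a t + β t * β t := by nlinarith [mul_self_nonneg (β t)]
  have hsqrt : √(1 + (2 * (a t * β t / lam)) ^ 2) = (a t * a t + β t * β t) / lam := by
    rw [← sqrt_sq (div_pos hS hlam).le]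
    congr 1
    field_simp
    linear_combination (-(a t * a t - β t * β t + lam)) * hcons
  convert (((hasDerivWithinAt_mul_of_twoLayer ha hβ).div_const lam).const_mul 2).arsinh using 1
  have hS' : a t ^ 2 + β t ^ 2 ≠ 0 := by nlinarith
  rw [hsqrt, smul_eq_mul]
  field_simp

end TwoLayer

theorem stmt_1_general (lam z κ t₀ M : ℝ) (h a β : ℝ → ℝ)
    (hlam : 0 < lam)
    (ha0 : a 0 = Real.sqrt lam) (hβ0 : β 0 = 0)
    (hode : ∀ t ∈ Ici (0 : ℝ),
      HasDerivWithinAt β (a t * (z - a t * β t + h t)) (Ici 0) t ∧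
      HasDerivWithinAt a (β t * (z - a t * β t + h t)) (Ici 0) t)
    (hz : 0 ≤ z) (ht₀ : 0 ≤ t₀) (hκ : 0 < κ)
    (hhb : ∀ t, t₀ ≤ t → |h t| ≤ κ)
    (hlow : z - M ≤ a t₀ * β t₀) (hhigh : a t₀ * β t₀ ≤ z) :
    ∀ t : ℝ, t₀ + κ⁻¹ * (2 + (1 / 2) * max (Real.log (M / lam)) 0
        + (1 / 2) * max (Real.log ((z - 2 * κ) / lam)) 0) ≤ t →
      |z - a t * β t| ≤ 2 * κ := by
  intro t ht
  set E := 2 + (1 / 2) * max (Real.log (M / lam)) 0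
    + (1 / 2) * max (Real.log ((z - 2 * κ) / lam)) 0 with hE
  set T := t₀ + κ⁻¹ * E
  have hsub : Ici t₀ ⊆ Ici 0 := Ici_subset_Ici.2 ht₀
  have hcons (s : ℝ) (hs : s ∈ Ici t₀) : a s * a s - β s * β s = lam := by
    rw [mul_self_sub_mul_self_eq_of_twoLayer (fun u hu => (hode u hu).2)
      (fun u hu => (hode u hu).1) s (hsub hs), ha0, hβ0, mul_self_sqrt hlam.le]
    ring
  have hS (s : ℝ) (hs : s ∈ Ici t₀) : 0 < a s * a s + β s * β s := by
    nlinarith [hcons s hs, mul_self_nonneg (β s)]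
  have hθ (s : ℝ) (hs : s ∈ Ici t₀) := (hasDerivWithinAt_mul_of_twoLayer
    (g := fun u => z - a u * β u + h u) (hode s (hsub hs)).2 (hode s (hsub hs)).1).mono hsub
  have hψ (s : ℝ) (hs : s ∈ Ici t₀) := (hasDerivWithinAt_arsinh_of_twoLayer hlam (hcons s hs)
    (g := fun u => z - a u * β u + h u) (hode s (hsub hs)).2 (hode s (hsub hs)).1).mono hsub
  have hT : t₀ ≤ T := le_add_of_nonneg_right (by simp only [E]; positivity)
  have hupper := le_add_of_relaxation (κ := 2 * κ) hθ hS
    (fun s hs => by linarith [(abs_le.1 (hhb s hs)).2]) (by linarith) t (hT.trans ht)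
  have hlower := sub_le_of_relaxation_of_progress hθ hS hκ hhb hψ
    (c := arsinh (2 * ((z - 2 * κ) / lam))) (fun s hs => by rw [arsinh_lt_arsinh]; gcongr) hT ?_ t ht
  · rw [abs_le]
    constructor <;> linarith
  have hψt₀ : -arsinh (2 * (M / lam)) ≤ arsinh (2 * (a t₀ * β t₀ / lam)) := by
    rw [← arsinh_neg, arsinh_le_arsinh, ← mul_neg, ← neg_div]
    gcongr
    linarith
  have hduration : 2 * κ * (T - t₀) = 2 * E := by
    simp only [T]
    field_simp
    ring
  linarith [arsinh_two_mul_le (M / lam), arsinh_two_mul_le ((z - 2 * κ) / lam)]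

/-- Approaching from below (large κ) for the perturbed two-layer dynamics. -/
theorem stmt_1 (lam z κ t₀ M : ℝ) (h a β : ℝ → ℝ)
    (hlam : 0 < lam) (hh : ContinuousOn h (Ici 0))
    (ha0 : a 0 = Real.sqrt lam) (hβ0 : β 0 = 0)
    (hode : ∀ t ∈ Ici (0 : ℝ),
      HasDerivWithinAt β (a t * (z - a t * β t + h t)) (Ici 0) t ∧
      HasDerivWithinAt a (β t * (z - a t * β t + h t)) (Ici 0) t)
    (hz : 0 ≤ z) (ht₀ : 0 ≤ t₀) (hκ : 0 < κ)
    (hhb : ∀ t, t₀ ≤ t → |h t| ≤ κ) (hM : 0 ≤ M)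
    (hlow : z - M ≤ a t₀ * β t₀) (hhigh : a t₀ * β t₀ ≤ z) :
    ∀ t : ℝ, t₀ + κ⁻¹ * (2 + (1 / 2) * max (Real.log (M / lam)) 0
        + (1 / 2) * max (Real.log ((z - 2 * κ) / lam)) 0) ≤ t →
      |z - a t * β t| ≤ 2 * κ :=
  stmt_1_general lam z κ t₀ M h a β hlam ha0 hβ0 hode hz ht₀ hκ hhb hlow hhigh
end

section
/- Approximation time near z for the perturbed two-layer dynamics: assume z ≥ 0, let t₀ ≥ 0, suppose |h(t)| ≤ κ for all t ≥ t₀ for some κ > 0, and suppose z/4 ≤ θ(t₀) ≤ 3z. Then for any δ > 0, |z − θ(t)| ≤ κ + δ for all t ≥ t₀ + 4z⁻¹ ln⁺((|z − θ(t₀)| − κ)/δ). -/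
/-!
Along the dynamics `θ = aβ` satisfies `θ' = (a² + β²)(z - θ + h)` with `a² + β² ≥ 2θ`.
Outside the band `[z - κ, z + κ]` the perturbation `|h| ≤ κ` cannot change the sign of
`z - θ + h`, so `θ` is pushed towards the band. Below it `θ` increases and hence stays
`≥ θ(t₀) ≥ z/4`; above it `θ > z`.
Either way the rate `a² + β²` is at least `z/4`, so the distance from `θ` to the band decays at
least like `e^{-z(t - t₀)/4}`, and it is below `δ` after the stated waiting time.
-/

open Real Set

theorem le_mul_exp_of_deriv_right_le_neg_mul {f f' : ℝ → ℝ} {a b c M : ℝ} (hc : 0 ≤ c)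
    (hM : 0 ≤ M) (ha : f a ≤ M) (hf : ContinuousOn f (Icc a b))
    (hf' : ∀ x ∈ Ico a b, HasDerivWithinAt f (f' x) (Ici x) x)
    (bound : ∀ x ∈ Ico a b, 0 < f x → f' x ≤ -c * f x) :
    ∀ ⦃x⦄, x ∈ Icc a b → f x ≤ M * exp (-(c * (x - a))) := by
  intro x hx
  -- the `ε`-term makes the barrier strict, as the fencing theorem requires
  have barrier : ∀ ε > 0, ∀ y ∈ Icc a b,
      f y ≤ M * exp (-(c * (y - a))) + ε * (1 + (y - a)) := by
    intro ε hε
    have hB : ∀ y, HasDerivAt (fun y => M * exp (-(c * (y - a))) + ε * (1 + (y - a)))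
        (-c * (M * exp (-(c * (y - a)))) + ε) y := by
      intro y
      have hlin := (hasDerivAt_id' y).sub_const a
      exact (((hlin.const_mul c).neg.exp.const_mul M).add
        ((hlin.const_add 1).const_mul ε)).congr_deriv (by simp only [Pi.neg_apply]; ring)
    have hBa : f a ≤ M * exp (-(c * (a - a))) + ε * (1 + (a - a)) := by
      simp only [sub_self, mul_zero, neg_zero, exp_zero, mul_one, add_zero]
      linarith
    refine image_le_of_deriv_right_lt_deriv_boundary hf hf' hBa hB ?_
    intro y hy hfy
    have hE := exp_pos (-(c * (y - a)))
    have hK : 0 < 1 + (y - a) := by linarith [hy.1]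
    have hpos : 0 < f y := hfy ▸ add_pos_of_nonneg_of_pos (mul_nonneg hM hE.le) (mul_pos hε hK)
    have := bound y hy hpos
    rw [hfy] at this
    nlinarith [mul_nonneg (mul_nonneg hc hε.le) hK.le]
  refine le_of_forall_pos_le_add fun η hη => ?_
  have hK : 0 < 1 + (x - a) := by linarith [hx.1]
  have := barrier (η / (1 + (x - a))) (div_pos hη hK) x hx
  rwa [div_mul_cancel₀ _ hK.ne'] at this

theorem hasDerivWithinAt_mul_of_cross_deriv {u v : ℝ → ℝ} {g x : ℝ} {s : Set ℝ}
    (hu : HasDerivWithinAt u (v x * g) s x) (hv : HasDerivWithinAt v (u x * g) s x) :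
    HasDerivWithinAt (fun y => u y * v y) ((u x ^ 2 + v x ^ 2) * g) s x :=
  (hu.mul hv).congr_deriv (by ring)

theorem mul_exp_neg_le_of_log_le {c D δ s : ℝ} (hc : 0 < c) (hδ : 0 < δ)
    (hs : c⁻¹ * max (log (D / δ)) 0 ≤ s) : max D δ * exp (-(c * s)) ≤ δ := by
  have hcs : max (log (D / δ)) 0 ≤ c * s := (inv_mul_le_iff₀ hc).1 hs
  rcases le_or_gt D δ with hD | hD
  · rw [max_eq_right hD]
    exact mul_le_of_le_one_right hδ.le
      (exp_le_one_iff.2 (by linarith [le_max_right (log (D / δ)) 0]))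
  · rw [max_eq_left hD.le, exp_neg, ← div_eq_mul_inv, div_le_iff₀ (exp_pos _), mul_comm,
      ← div_le_iff₀ hδ, ← log_le_iff_le_exp (div_pos (hδ.trans hD) hδ)]
    exact (le_max_left _ _).trans hcs

section PerturbedFlow

variable {θ q h : ℝ → ℝ} {z κ a b : ℝ}
  (hθ : ContinuousOn θ (Icc a b))
  (hθ' : ∀ x ∈ Ico a b, HasDerivWithinAt θ (q x * (z - θ x + h x)) (Ici x) x)
  (hh : ∀ x ∈ Ico a b, |h x| ≤ κ)
include hθ hθ' hh

theorem min_le_of_perturbed_flow (hq : ∀ x, 0 ≤ q x) :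
    ∀ ⦃x⦄, x ∈ Icc a b → min (θ a) (z - κ) ≤ θ x := by
  intro x hx
  have := le_mul_exp_of_deriv_right_le_neg_mul (f := fun y => min (θ a) (z - κ) - θ y)
    (c := 0) le_rfl le_rfl (by simp) (continuousOn_const.sub hθ)
    (fun y hy => (hasDerivWithinAt_const _ _ _).sub (hθ' y hy)) ?_ hx
  · simpa using this
  intro y hy hpos
  have : 0 ≤ z - θ y + h y := by
    linarith [abs_le.1 (hh y hy), min_le_right (θ a) (z - κ)]
  simpa using mul_nonneg (hq y) this

theorem abs_sub_le_of_perturbed_flow (hq : ∀ x, 0 ≤ q x) (hθq : ∀ x, 2 * θ x ≤ q x)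
    {c M : ℝ} (hc : 0 ≤ c) (hca : c ≤ 2 * θ a) (hcz : c ≤ 2 * z) (hM : 0 ≤ M)
    (ha : |z - θ a| - κ ≤ M) :
    ∀ ⦃x⦄, x ∈ Icc a b → |z - θ x| ≤ κ + M * exp (-(c * (x - a))) := by
  intro x hx
  replace ha := abs_sub_le_iff.1 (show |z - θ a| ≤ M + κ by linarith)
  rw [abs_sub_le_iff]
  constructor
  · have := le_mul_exp_of_deriv_right_le_neg_mul (f := fun y => z - κ - θ y) hc hM
      (by linarith [ha.1]) (continuousOn_const.sub hθ)
      (fun y hy => (hasDerivWithinAt_const _ _ _).sub (hθ' y hy)) ?_ hx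
    · linarith
    intro y hy hpos
    -- below `z - κ` the flow only increases `θ`, so `q y ≥ 2 θ y ≥ 2 θ a ≥ c`
    have hθy : θ a ≤ θ y := by
      rcases min_le_iff.1 (min_le_of_perturbed_flow hθ hθ' hh hq (Ico_subset_Icc_self hy)) with
        h' | h'
      · exact h'
      · linarith
    have := abs_le.1 (hh y hy)
    nlinarith [hθq y]
  · have := le_mul_exp_of_deriv_right_le_neg_mul (f := fun y => θ y - z - κ) hc hM
      (by linarith [ha.2]) ((hθ.sub continuousOn_const).sub continuousOn_const)
      (fun y hy => ((hθ' y hy).sub_const z).sub_const κ) ?_ hx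
    · linarith
    intro y hy hpos
    have := abs_le.1 (hh y hy)
    nlinarith [hθq y]

end PerturbedFlow

theorem stmt_4_general (z κ t₀ : ℝ) (h a β : ℝ → ℝ)
    (hode : ∀ t ∈ Ici (0 : ℝ),
      HasDerivWithinAt β (a t * (z - a t * β t + h t)) (Ici 0) t ∧
      HasDerivWithinAt a (β t * (z - a t * β t + h t)) (Ici 0) t)
    (ht₀ : 0 ≤ t₀)
    (hhb : ∀ t, t₀ ≤ t → |h t| ≤ κ)
    (hlow : z / 4 ≤ a t₀ * β t₀) (hhigh : a t₀ * β t₀ ≤ 3 * z) :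
    ∀ δ : ℝ, 0 < δ →
      ∀ t : ℝ, t₀ + 4 * z⁻¹ * max (Real.log ((|z - a t₀ * β t₀| - κ) / δ)) 0 ≤ t →
        |z - a t * β t| ≤ κ + δ := by
  intro δ hδ t ht
  have hz : 0 ≤ z := by linarith
  have hκ : 0 ≤ κ := (abs_nonneg _).trans (hhb t₀ le_rfl)
  have ht₀t : t₀ ≤ t := le_trans (le_add_of_nonneg_right (by positivity)) ht
  have hθ' : ∀ x ∈ Ici (0 : ℝ), HasDerivWithinAt (fun y => a y * β y)
      ((a x ^ 2 + β x ^ 2) * (z - a x * β x + h x)) (Ici 0) x :=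
    fun x hx => hasDerivWithinAt_mul_of_cross_deriv (hode x hx).2 (hode x hx).1
  have hθ : ContinuousOn (fun y => a y * β y) (Icc t₀ t) := fun x hx =>
    (hθ' x (ht₀.trans hx.1)).continuousWithinAt.mono
      (Icc_subset_Ici_self.trans (Ici_subset_Ici.2 ht₀))
  have hbound := abs_sub_le_of_perturbed_flow (c := z / 4) hθ
    (fun x hx => (hθ' x (ht₀.trans hx.1)).mono (Ici_subset_Ici.2 (ht₀.trans hx.1)))
    (fun x hx => hhb x hx.1) (fun x => by positivity)
    (fun x => by linarith [two_mul_le_add_sq (a x) (β x)])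
    (by positivity) (by linarith) (by linarith) (le_max_of_le_right hδ.le) (le_max_left _ δ)
    (right_mem_Icc.2 ht₀t)
  suffices max (|z - a t₀ * β t₀| - κ) δ * exp (-(z / 4 * (t - t₀))) ≤ δ by linarith
  rcases hz.eq_or_lt with rfl | hz
  · -- the waiting time is `0` here since `0⁻¹ = 0`, but `θ(t₀) = 0` is already in the band
    have : a t₀ * β t₀ = 0 := by linarith
    simp only [this, sub_self, abs_zero, zero_sub, zero_div, zero_mul, neg_zero, exp_zero,
      mul_one, max_le_iff]
    exact ⟨by linarith, le_rfl⟩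
  · exact mul_exp_neg_le_of_log_le (by positivity) hδ (by rw [inv_div, div_eq_mul_inv]; linarith)

/-- Approximation time near z for the perturbed two-layer dynamics. -/
theorem stmt_4 (lam z κ t₀ : ℝ) (h a β : ℝ → ℝ)
    (hlam : 0 < lam) (hh : ContinuousOn h (Ici 0))
    (ha0 : a 0 = Real.sqrt lam) (hβ0 : β 0 = 0)
    (hode : ∀ t ∈ Ici (0 : ℝ),
      HasDerivWithinAt β (a t * (z - a t * β t + h t)) (Ici 0) t ∧
      HasDerivWithinAt a (β t * (z - a t * β t + h t)) (Ici 0) t)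
    (hz : 0 ≤ z) (ht₀ : 0 ≤ t₀) (hκ : 0 < κ)
    (hhb : ∀ t, t₀ ≤ t → |h t| ≤ κ)
    (hlow : z / 4 ≤ a t₀ * β t₀) (hhigh : a t₀ * β t₀ ≤ 3 * z) :
    ∀ δ : ℝ, 0 < δ →
      ∀ t : ℝ, t₀ + 4 * z⁻¹ * max (Real.log ((|z - a t₀ * β t₀| - κ) / δ)) 0 ≤ t →
        |z - a t * β t| ≤ κ + δ :=
  stmt_4_general z κ t₀ h a β hode ht₀ hhb hlow hhigh
end

section
/- Approaching from above to within 4κ for the perturbed two-layer dynamics: assume z ≥ 0, let t₀ ≥ 0, suppose |h(t)| ≤ κ for all t ≥ t₀ for some κ > 0, and suppose θ(t₀) ≥ z. Then |z − θ(t)| ≤ 4κ for all t ≥ t₀ + κ⁻¹ (1 + ln⁺(|z − θ(t₀)|/κ)). -/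
open Real Set

/-!
Along the flow, `θ = aβ` satisfies `θ' = (a² + β²)(z - θ + h)`, and the conserved quantity
`a² - β² = λ` makes the rate `a² + β²` positive and at least `2θ`. Hence `z - θ` cannot cross `2κ`,
where the drift `z - θ + h` is at least `κ`. Above `z`, once the excess `u = θ - z` reaches `2κ` it
obeys `u' ≤ 2u(κ - u)`, which keeps it under the fence `2κ + u(t₀) e^{-2κ(t - t₀)}`; after the
waiting time `κ⁻¹ (1 + ln⁺ (u(t₀)/κ))` the exponential term is at most `κ`.
-/

theorem image_le_of_hasDerivWithinAt_Ici_of_lt_deriv_boundary {f f' B B' : ℝ → ℝ} {t₀ : ℝ}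
    (hf : ∀ x ∈ Ici t₀, HasDerivWithinAt f (f' x) (Ici t₀) x) (ha : f t₀ ≤ B t₀)
    (hB : ∀ x, HasDerivAt B (B' x) x) (bound : ∀ x ∈ Ici t₀, f x = B x → f' x < B' x) :
    ∀ x ∈ Ici t₀, f x ≤ B x := fun _ ht =>
  image_le_of_deriv_right_lt_deriv_boundary
    (fun x hx => (hf x hx.1).continuousWithinAt.mono Icc_subset_Ici_self)
    (fun x hx => (hf x hx.1).mono (Ici_subset_Ici.2 hx.1)) ha hB
    (fun x hx => bound x hx.1) ⟨ht, le_rfl⟩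

theorem sq_sub_sq_eq_of_hasDerivWithinAt {a β g : ℝ → ℝ} {t₀ : ℝ}
    (ha : ∀ x ∈ Ici t₀, HasDerivWithinAt a (β x * g x) (Ici t₀) x)
    (hβ : ∀ x ∈ Ici t₀, HasDerivWithinAt β (a x * g x) (Ici t₀) x) :
    ∀ t ∈ Ici t₀, a t ^ 2 - β t ^ 2 = a t₀ ^ 2 - β t₀ ^ 2 := by
  have hderiv : ∀ x ∈ Ici t₀, HasDerivWithinAt (fun y => a y ^ 2 - β y ^ 2) 0 (Ici t₀) x := by
    intro x hx
    exact (((ha x hx).fun_pow 2).fun_sub ((hβ x hx).fun_pow 2)).congr_deriv (by ring)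
  intro t ht
  exact constant_of_has_deriv_right_zero
    (fun x hx => (hderiv x hx.1).continuousWithinAt.mono Icc_subset_Ici_self)
    (fun x hx => (hderiv x hx.1).mono (Ici_subset_Ici.2 hx.1)) t ⟨ht, le_rfl⟩

section Relaxation

variable {θ w h : ℝ → ℝ} {z κ t₀ : ℝ}

theorem sub_le_two_mul_of_hasDerivWithinAt (hκ : 0 < κ)
    (hθ : ∀ x ∈ Ici t₀, HasDerivWithinAt θ (w x * (z - θ x + h x)) (Ici t₀) x)
    (hw : ∀ x ∈ Ici t₀, 0 < w x) (hh : ∀ x ∈ Ici t₀, |h x| ≤ κ) (h₀ : z - θ t₀ ≤ 2 * κ) :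
    ∀ t ∈ Ici t₀, z - θ t ≤ 2 * κ := by
  refine image_le_of_hasDerivWithinAt_Ici_of_lt_deriv_boundary
    (fun x hx => (hθ x hx).const_sub z) h₀ (fun _ => hasDerivAt_const _ _) ?_
  intro x hx hcontact
  have : κ ≤ z - θ x + h x := by linarith [(abs_le.1 (hh x hx)).1]
  have := mul_pos (hw x hx) (hκ.trans_le this)
  linarith

theorem sub_le_two_mul_add_mul_exp_of_hasDerivWithinAt (hz : 0 ≤ z) (hκ : 0 < κ)
    (hθ : ∀ x ∈ Ici t₀, HasDerivWithinAt θ (w x * (z - θ x + h x)) (Ici t₀) x)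
    (hw : ∀ x ∈ Ici t₀, 2 * θ x ≤ w x) (hh : ∀ x ∈ Ici t₀, |h x| ≤ κ) (h₀ : z ≤ θ t₀) :
    ∀ t ∈ Ici t₀, θ t - z ≤ 2 * κ + (θ t₀ - z) * exp (-(2 * κ) * (t - t₀)) := by
  have hB : ∀ x, HasDerivAt (fun t => 2 * κ + (θ t₀ - z) * exp (-(2 * κ) * (t - t₀)))
      ((θ t₀ - z) * (exp (-(2 * κ) * (x - t₀)) * -(2 * κ))) x := fun x =>
    ((((hasDerivAt_id x).sub_const t₀).const_mul _).exp.const_mul _).const_add _ |>.congr_deriv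
      (by simp)
  refine image_le_of_hasDerivWithinAt_Ici_of_lt_deriv_boundary
    (fun x hx => (hθ x hx).sub_const z) (by simp [hκ.le]) hB ?_
  intro x hx hcontact
  set u := θ x - z
  have hE := exp_pos (-(2 * κ) * (x - t₀))
  have hu : 2 * κ ≤ u := by nlinarith
  -- the drift is at most `2u(κ - u)`, which lies strictly below the slope `-2κ(u - 2κ)` of the fence
  have hdrift : z - θ x + h x ≤ κ - u := by linarith [(abs_le.1 (hh x hx)).2]
  have hw' : 2 * u ≤ w x := by linarith [hw x hx]
  have : w x * (z - θ x + h x) ≤ 2 * u * (κ - u) := by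
    nlinarith [mul_le_mul_of_nonneg_left hdrift (by linarith : (0 : ℝ) ≤ w x)]
  nlinarith [sq_nonneg (u - κ)]

end Relaxation

theorem mul_exp_neg_two_mul_le {D κ s : ℝ} (hD : 0 ≤ D) (hκ : 0 < κ) (hs : 0 ≤ s)
    (hlog : log (D / κ) ≤ κ * s) : D * exp (-(2 * κ) * s) ≤ κ := by
  rcases hD.eq_or_lt with rfl | hD
  · simpa using hκ.le
  have hDκ : D ≤ κ * exp (κ * s) := by
    rwa [log_le_iff_le_exp (by positivity), div_le_iff₀ hκ, mul_comm] at hlog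
  calc D * exp (-(2 * κ) * s) ≤ κ * exp (κ * s) * exp (-(2 * κ) * s) := by gcongr
    _ = κ * exp (-(κ * s)) := by rw [mul_assoc, ← exp_add]; ring_nf
    _ ≤ κ := mul_le_of_le_one_right hκ.le (exp_le_one_iff.2 (by nlinarith))

theorem stmt_5_general (lam z κ t₀ : ℝ) (h a β : ℝ → ℝ)
    (hlam : 0 < lam)
    (ha0 : a 0 = Real.sqrt lam) (hβ0 : β 0 = 0)
    (hode : ∀ t ∈ Ici (0 : ℝ),
      HasDerivWithinAt β (a t * (z - a t * β t + h t)) (Ici 0) t ∧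
      HasDerivWithinAt a (β t * (z - a t * β t + h t)) (Ici 0) t)
    (hz : 0 ≤ z) (ht₀ : 0 ≤ t₀) (hκ : 0 < κ)
    (hhb : ∀ t, t₀ ≤ t → |h t| ≤ κ)
    (hinit : z ≤ a t₀ * β t₀) :
    ∀ t : ℝ, t₀ + κ⁻¹ * (1 + max (Real.log (|z - a t₀ * β t₀| / κ)) 0) ≤ t →
      |z - a t * β t| ≤ 4 * κ := by
  intro t ht
  have hwait : 1 + max (log (|z - a t₀ * β t₀| / κ)) 0 ≤ κ * (t - t₀) := by
    rw [← inv_mul_le_iff₀ hκ]; linarith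
  have htt₀ : t₀ ≤ t := by nlinarith [le_max_right (log (|z - a t₀ * β t₀| / κ)) 0]
  have hcons : ∀ s ∈ Ici (0 : ℝ), a s ^ 2 - β s ^ 2 = lam := fun s hs => by
    rw [sq_sub_sq_eq_of_hasDerivWithinAt (fun x hx => (hode x hx).2) (fun x hx => (hode x hx).1) s hs,
      ha0, hβ0, sq_sqrt hlam.le]
    ring
  have hθ : ∀ x ∈ Ici t₀, HasDerivWithinAt (fun s => a s * β s)
      ((a x ^ 2 + β x ^ 2) * (z - a x * β x + h x)) (Ici t₀) x := fun x hx =>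
    (((hode x (ht₀.trans hx)).2.mul (hode x (ht₀.trans hx)).1).congr_deriv (by ring)).mono
      (Ici_subset_Ici.2 ht₀)
  have hlower := sub_le_two_mul_of_hasDerivWithinAt hκ hθ
    (fun x hx => by nlinarith [hcons x (ht₀.trans hx), sq_nonneg (β x)]) hhb (by linarith) t htt₀
  have hupper := sub_le_two_mul_add_mul_exp_of_hasDerivWithinAt hz hκ hθ
    (fun x _ => by nlinarith [sq_nonneg (a x - β x)]) hhb hinit t htt₀
  have hdecay := mul_exp_neg_two_mul_le (sub_nonneg.2 hinit) hκ (sub_nonneg.2 htt₀)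
    (by rw [abs_sub_comm, abs_of_nonneg (sub_nonneg.2 hinit)] at hwait
        linarith [le_max_left (log ((a t₀ * β t₀ - z) / κ)) 0])
  rw [abs_le]
  constructor <;> linarith

/-- Approaching from above to within 4κ for the perturbed two-layer dynamics. -/
theorem stmt_5 (lam z κ t₀ : ℝ) (h a β : ℝ → ℝ)
    (hlam : 0 < lam) (hh : ContinuousOn h (Ici 0))
    (ha0 : a 0 = Real.sqrt lam) (hβ0 : β 0 = 0)
    (hode : ∀ t ∈ Ici (0 : ℝ),
      HasDerivWithinAt β (a t * (z - a t * β t + h t)) (Ici 0) t ∧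
      HasDerivWithinAt a (β t * (z - a t * β t + h t)) (Ici 0) t)
    (hz : 0 ≤ z) (ht₀ : 0 ≤ t₀) (hκ : 0 < κ)
    (hhb : ∀ t, t₀ ≤ t → |h t| ≤ κ)
    (hinit : z ≤ a t₀ * β t₀) :
    ∀ t : ℝ, t₀ + κ⁻¹ * (1 + max (Real.log (|z - a t₀ * β t₀| / κ)) 0) ≤ t →
      |z - a t * β t| ≤ 4 * κ :=
  stmt_5_general lam z κ t₀ h a β hlam ha0 hβ0 hode hz ht₀ hκ hhb hinit
end

section
/- Retracting from the negative for the perturbed two-layer dynamics: assume z ≥ 0, let t₀ ≥ 0, and suppose |h(t)| ≤ κ for all t ≥ t₀ for some κ > 0. Then θ(t) ≥ −2κ for all t ≥ t₀ + κ⁻¹. -/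
/-!
For `F := -θ` the dynamics give `F' = -(a² + β²)(z + F + h)`. Since `a² + β² ≥ -2aβ = 2F`,
while `z ≥ 0` and `h ≥ -κ`, the Riccati inequality `F' ≤ -F²` holds wherever `F ≥ 2κ`.
Hence once `F` drops to `2κ` it stays there, and if it stays above `2κ` on `[t₀, t]`, then
`1/F` grows at rate at least `1`, so `F t ≤ 1/(t - t₀) ≤ κ`.
-/

open Set

lemma inv_add_sub_le_inv_of_deriv_le_neg_sq {F F' : ℝ → ℝ} {a b : ℝ} (hab : a ≤ b)
    (hF : ContinuousOn F (Icc a b)) (hF' : ∀ x ∈ Ioo a b, HasDerivAt F (F' x) x)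
    (hpos : ∀ x ∈ Icc a b, 0 < F x) (hle : ∀ x ∈ Ioo a b, F' x ≤ -F x ^ 2) :
    (F a)⁻¹ + (b - a) ≤ (F b)⁻¹ := by
  have hmono : MonotoneOn (fun x => (F x)⁻¹ - x) (Icc a b) := by
    refine monotoneOn_of_hasDerivWithinAt_nonneg (f' := fun x => -F' x / F x ^ 2 - 1)
      (convex_Icc a b) ((hF.inv₀ fun x hx => (hpos x hx).ne').sub continuousOn_id)
      (fun x hx => ?_) (fun x hx => ?_) <;> rw [interior_Icc] at hx
    · exact (((hF' x hx).inv (hpos x (Ioo_subset_Icc_self hx)).ne').sub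
        (hasDerivAt_id x)).hasDerivWithinAt
    · have := hpos x (Ioo_subset_Icc_self hx)
      rw [sub_nonneg, le_div_iff₀ (by positivity)]
      linarith [hle x hx]
  have := hmono (left_mem_Icc.2 hab) (right_mem_Icc.2 hab) hab
  linarith

lemma le_of_exists_le_of_deriv_nonpos {F F' : ℝ → ℝ} {a b c : ℝ}
    (hF : ContinuousOn F (Icc a b)) (hF' : ∀ x ∈ Ioo a b, HasDerivAt F (F' x) x)
    (hnonpos : ∀ x ∈ Ioo a b, c < F x → F' x ≤ 0) (hdip : ∃ s ∈ Icc a b, F s ≤ c) :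
    F b ≤ c := by
  by_contra! hb
  obtain ⟨s, hs, hFs⟩ := hdip
  set S := Icc a b ∩ F ⁻¹' Iic c
  have hSbdd : BddAbove S := bddAbove_Icc.mono inter_subset_left
  obtain ⟨⟨has, hsb⟩, hFsup⟩ : sSup S ∈ S :=
    (hF.preimage_isClosed_of_isClosed isClosed_Icc isClosed_Iic).csSup_mem ⟨s, hs, hFs⟩ hSbdd
  have hlt : sSup S < b := hsb.lt_of_ne fun h => by rw [h] at hFsup; exact hb.not_ge hFsup
  have habove : ∀ x ∈ Ioo (sSup S) b, c < F x := fun x hx => not_le.1 fun hx' =>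
    hx.1.not_ge (le_csSup hSbdd ⟨⟨has.trans hx.1.le, hx.2.le⟩, hx'⟩)
  have hanti : AntitoneOn F (Icc (sSup S) b) := by
    refine antitoneOn_of_hasDerivWithinAt_nonpos (f' := F') (convex_Icc _ _)
      (hF.mono (Icc_subset_Icc_left has))
      (fun x hx => ?_) (fun x hx => ?_) <;> rw [interior_Icc] at hx
    · exact (hF' x ⟨has.trans_lt hx.1, hx.2⟩).hasDerivWithinAt
    · exact hnonpos x ⟨has.trans_lt hx.1, hx.2⟩ (habove x hx)
  exact hb.not_ge ((hanti (left_mem_Icc.2 hlt.le) (right_mem_Icc.2 hlt.le) hlt.le).trans hFsup)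

lemma le_max_inv_of_deriv_le_neg_sq {F F' : ℝ → ℝ} {a b c : ℝ} (hab : a < b) (hc : 0 < c)
    (hF : ContinuousOn F (Icc a b)) (hF' : ∀ x ∈ Ioo a b, HasDerivAt F (F' x) x)
    (hle : ∀ x ∈ Ioo a b, c ≤ F x → F' x ≤ -F x ^ 2) :
    F b ≤ max c (b - a)⁻¹ := by
  by_cases hdip : ∃ s ∈ Icc a b, F s ≤ c
  · refine le_max_of_le_left (le_of_exists_le_of_deriv_nonpos hF hF' (fun x hx hcx => ?_) hdip)
    linarith [hle x hx hcx.le, sq_nonneg (F x)]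
  · push Not at hdip
    have hpos : ∀ x ∈ Icc a b, 0 < F x := fun x hx => hc.trans (hdip x hx)
    have hgrowth := inv_add_sub_le_inv_of_deriv_le_neg_sq hab.le hF hF' hpos
      fun x hx => hle x hx (hdip x (Ioo_subset_Icc_self hx)).le
    have hFa := inv_pos.2 (hpos a (left_mem_Icc.2 hab.le))
    have hFb := hpos b (right_mem_Icc.2 hab.le)
    refine le_max_of_le_right ((le_inv_comm₀ (sub_pos.2 hab) hFb).1 ?_)
    linarith

lemma hasDerivAt_neg_mul_of_swap {a β g : ℝ → ℝ} {t : ℝ} (ha : HasDerivAt a (β t * g t) t)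
    (hβ : HasDerivAt β (a t * g t) t) :
    HasDerivAt (fun s => -(a s * β s)) (-((a t ^ 2 + β t ^ 2) * g t)) t :=
  (ha.fun_mul hβ).fun_neg.congr_deriv (by ring)

lemma sq_mul_le_sq_add_sq_mul {a β z h κ : ℝ} (hκ : 0 ≤ κ) (hz : 0 ≤ z) (hh : -κ ≤ h)
    (hθ : 2 * κ ≤ -(a * β)) :
    (a * β) ^ 2 ≤ (a ^ 2 + β ^ 2) * (z - a * β + h) := by
  nlinarith [sq_nonneg (a + β)]

theorem stmt_7_general (z κ t₀ : ℝ) (h a β : ℝ → ℝ)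
    (hode : ∀ t ∈ Ici (0 : ℝ),
      HasDerivWithinAt β (a t * (z - a t * β t + h t)) (Ici 0) t ∧
      HasDerivWithinAt a (β t * (z - a t * β t + h t)) (Ici 0) t)
    (hz : 0 ≤ z) (ht₀ : 0 ≤ t₀) (hκ : 0 < κ)
    (hhb : ∀ t, t₀ ≤ t → |h t| ≤ κ) :
    ∀ t : ℝ, t₀ + κ⁻¹ ≤ t → -(2 * κ) ≤ a t * β t := by
  intro t ht
  have hcont : ContinuousOn (fun s => -(a s * β s)) (Icc t₀ t) := fun s hs =>
    ((hode s (ht₀.trans hs.1)).2.continuousWithinAt.mul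
      (hode s (ht₀.trans hs.1)).1.continuousWithinAt).neg.mono fun x hx => ht₀.trans hx.1
  have hderiv : ∀ s ∈ Ioo t₀ t, HasDerivAt (fun s => -(a s * β s))
      (-((a s ^ 2 + β s ^ 2) * (z - a s * β s + h s))) s := fun s hs =>
    have hnhds := Ici_mem_nhds (ht₀.trans_lt hs.1)
    hasDerivAt_neg_mul_of_swap (g := fun s => z - a s * β s + h s)
      ((hode s (ht₀.trans hs.1.le)).2.hasDerivAt hnhds)
      ((hode s (ht₀.trans hs.1.le)).1.hasDerivAt hnhds)
  have hriccati : ∀ s ∈ Ioo t₀ t, 2 * κ ≤ -(a s * β s) →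
      -((a s ^ 2 + β s ^ 2) * (z - a s * β s + h s)) ≤ -(-(a s * β s)) ^ 2 := by
    intro s hs hFs
    rw [neg_sq, neg_le_neg_iff]
    exact sq_mul_le_sq_add_sq_mul hκ.le hz (neg_le_of_abs_le (hhb s hs.1.le)) hFs
  have hbound := le_max_inv_of_deriv_le_neg_sq (by linarith [inv_pos.2 hκ]) (by positivity)
    hcont hderiv hriccati
  have hinv : (t - t₀)⁻¹ ≤ κ := inv_le_of_inv_le₀ hκ (by linarith)
  have := hbound.trans (max_le le_rfl (by linarith))
  linarith

/-- Retracting from the negative for the perturbed two-layer dynamics. -/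
theorem stmt_7 (lam z κ t₀ : ℝ) (h a β : ℝ → ℝ)
    (hlam : 0 < lam) (hh : ContinuousOn h (Ici 0))
    (ha0 : a 0 = Real.sqrt lam) (hβ0 : β 0 = 0)
    (hode : ∀ t ∈ Ici (0 : ℝ),
      HasDerivWithinAt β (a t * (z - a t * β t + h t)) (Ici 0) t ∧
      HasDerivWithinAt a (β t * (z - a t * β t + h t)) (Ici 0) t)
    (hz : 0 ≤ z) (ht₀ : 0 ≤ t₀) (hκ : 0 < κ)
    (hhb : ∀ t, t₀ ≤ t → |h t| ≤ κ) :
    ∀ t : ℝ, t₀ + κ⁻¹ ≤ t → -(2 * κ) ≤ a t * β t :=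
  stmt_7_general z κ t₀ h a β hode hz ht₀ hκ hhb
end

section
/- Retracting into range for the perturbed two-layer dynamics: let t₀ ≥ 0 and suppose |h(t)| ≤ κ for all t ≥ t₀ for some κ > 0 (z ∈ ℝ arbitrary). Then |z − θ(t)| ≤ 2·max(|z|, 2κ) for all t ≥ t₀ + κ⁻¹. -/
/-!
The error `e = z - θ` obeys `e' = -(a² + β²) (e - h)`, and `a² + β² ≥ 2 |θ|` dominates `|e|`
as soon as `|e| ≥ M := 2 max(|z|, 2κ)`. Above that level `|e|` therefore satisfies the
Riccati inequality `|e|' ≤ -|e|² / 2`, so `1 / |e|` grows at rate `1/2` and `|e|` must drop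
below `M` within time `κ⁻¹`; once below, it cannot cross `M` again because `|e|' < 0` there.
-/

open Set

section Retraction

variable {F F' : ℝ → ℝ} {s : ℝ}

theorem inv_add_mul_sub_le_inv_of_deriv_le_neg_mul_sq {T c : ℝ} (hsT : s ≤ T)
    (hF : ∀ t ∈ Ici s, HasDerivWithinAt F (F' t) (Ici s) t)
    (hpos : ∀ t ∈ Icc s T, 0 < F t) (hF' : ∀ t ∈ Ico s T, F' t ≤ -c * F t ^ 2) :
    (F s)⁻¹ + c * (T - s) ≤ (F T)⁻¹ := by
  refine image_le_of_deriv_right_le_deriv_boundary (f := fun t => (F s)⁻¹ + c * (t - s))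
    (f' := fun _ => c) (B' := fun t => -F' t / F t ^ 2) (by fun_prop) ?_ (by simp)
    (fun t ht => ((hF t ht.1).continuousWithinAt.mono Icc_subset_Ici_self).inv₀
      (hpos t ht).ne') ?_ ?_ ⟨hsT, le_rfl⟩
  · intro t _
    simpa using ((((hasDerivAt_id t).sub_const s).const_mul c).const_add (F s)⁻¹).hasDerivWithinAt
  · intro t ht
    exact ((hF t ht.1).mono (Ici_subset_Ici.2 ht.1)).inv (hpos t (Ico_subset_Icc_self ht)).ne'
  · intro t ht
    have hFt : 0 < F t ^ 2 := pow_pos (hpos t (Ico_subset_Icc_self ht)) 2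
    rw [le_div_iff₀ hFt]
    linarith [hF' t ht]

theorem le_of_deriv_neg_of_eq {M : ℝ}
    (hF : ∀ t ∈ Ici s, HasDerivWithinAt F (F' t) (Ici s) t)
    (hs : F s ≤ M) (hF' : ∀ t ∈ Ici s, F t = M → F' t < 0) :
    ∀ t ∈ Ici s, F t ≤ M := fun _ ht =>
  image_le_of_deriv_right_lt_deriv_boundary (B := fun _ => M) (B' := fun _ => 0)
    (fun u hu => (hF u hu.1).continuousWithinAt.mono Icc_subset_Ici_self)
    (fun u hu => (hF u hu.1).mono (Ici_subset_Ici.2 hu.1)) hs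
    (fun _ => hasDerivAt_const _ _) (fun u hu => hF' u hu.1) ⟨ht, le_rfl⟩

theorem le_of_relaxation {G H : ℝ → ℝ} {κ M : ℝ} (hκ : 0 < κ) (hM : 2 * κ ≤ M)
    (hF : ∀ t ∈ Ici s, HasDerivWithinAt F (G t * (H t - F t)) (Ici s) t)
    (hGF : ∀ t ∈ Ici s, M ≤ F t → F t ≤ G t) (hH : ∀ t ∈ Ici s, H t ≤ κ) :
    ∀ t, s + κ⁻¹ ≤ t → F t ≤ M := by
  intro t ht
  by_contra! hMt
  have hsT : s ≤ s + κ⁻¹ := le_add_of_nonneg_right (inv_nonneg.2 hκ.le)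
  have hFM : ∀ u ∈ Icc s t, M < F u := by
    intro u hu
    by_contra! hFu
    refine hMt.not_ge (le_of_deriv_neg_of_eq (s := u)
      (fun v hv => (hF v (hu.1.trans hv)).mono (Ici_subset_Ici.2 hu.1)) hFu (fun v hv hFv => ?_)
      t hu.2)
    nlinarith [hGF v (hu.1.trans hv) hFv.ge, hH v (hu.1.trans hv)]
  have hriccati : (F s)⁻¹ + 1 / 2 * (s + κ⁻¹ - s) ≤ (F (s + κ⁻¹))⁻¹ := by
    refine inv_add_mul_sub_le_inv_of_deriv_le_neg_mul_sq hsT hF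
      (fun u hu => (hκ.trans_le (by linarith)).trans (hFM u ⟨hu.1, hu.2.trans ht⟩))
      (fun u hu => ?_)
    -- `G ≥ F ≥ 2κ ≥ 2H` gives `G (H - F) ≤ F (H - F) ≤ -F² / 2`.
    have hFu := hFM u ⟨hu.1, hu.2.le.trans ht⟩
    nlinarith [hGF u hu.1 hFu.le, hH u hu.1]
  have hFs : 0 < (F s)⁻¹ := inv_pos.2 (by linarith [hFM s ⟨le_rfl, hsT.trans ht⟩])
  have hFT : (F (s + κ⁻¹))⁻¹ < (2 * κ)⁻¹ :=
    inv_strictAnti₀ (by positivity) (by linarith [hFM (s + κ⁻¹) ⟨hsT, ht⟩])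
  rw [mul_inv] at hFT
  linarith

end Retraction

theorem stmt_8_general (z κ t₀ : ℝ) (h a β : ℝ → ℝ)
    (hode : ∀ t ∈ Ici (0 : ℝ),
      HasDerivWithinAt β (a t * (z - a t * β t + h t)) (Ici 0) t ∧
      HasDerivWithinAt a (β t * (z - a t * β t + h t)) (Ici 0) t)
    (ht₀ : 0 ≤ t₀) (hκ : 0 < κ)
    (hhb : ∀ t, t₀ ≤ t → |h t| ≤ κ) :
    ∀ t : ℝ, t₀ + κ⁻¹ ≤ t →
      |z - a t * β t| ≤ 2 * max |z| (2 * κ) := by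
  set M := 2 * max |z| (2 * κ)
  have hκM : 2 * κ ≤ M := by linarith [le_max_right |z| (2 * κ)]
  obtain ⟨hzM₁, hzM₂⟩ := abs_le.1 (show |z| ≤ M / 2 by linarith [le_max_left |z| (2 * κ)])
  have hθ : ∀ t ∈ Ici t₀, HasDerivWithinAt (fun u => a u * β u)
      ((a t ^ 2 + β t ^ 2) * (z - a t * β t + h t)) (Ici t₀) t := fun t ht =>
    (((hode t (ht₀.trans ht)).2.mul (hode t (ht₀.trans ht)).1).mono
      (Ici_subset_Ici.2 ht₀)).congr_deriv (by ring)
  intro t ht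
  have hupper : z - a t * β t ≤ M :=
    le_of_relaxation (G := fun u => a u ^ 2 + β u ^ 2) (H := fun u => -h u) hκ hκM
      (fun u hu => ((hθ u hu).const_sub z).congr_deriv (by ring))
      (fun u _ hMu => by nlinarith [sq_nonneg (a u + β u)])
      (fun u hu => neg_le.1 (abs_le.1 (hhb u hu)).1) t ht
  have hlower : a t * β t - z ≤ M :=
    le_of_relaxation (G := fun u => a u ^ 2 + β u ^ 2) (H := h) hκ hκM
      (fun u hu => ((hθ u hu).sub_const z).congr_deriv (by ring))
      (fun u _ hMu => by nlinarith [sq_nonneg (a u - β u)])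
      (fun u hu => (abs_le.1 (hhb u hu)).2) t ht
  exact abs_sub_le_iff.2 ⟨hupper, hlower⟩

/-- Retracting into range for the perturbed two-layer dynamics. -/
theorem stmt_8 (lam z κ t₀ : ℝ) (h a β : ℝ → ℝ)
    (hlam : 0 < lam) (hh : ContinuousOn h (Ici 0))
    (ha0 : a 0 = Real.sqrt lam) (hβ0 : β 0 = 0)
    (hode : ∀ t ∈ Ici (0 : ℝ),
      HasDerivWithinAt β (a t * (z - a t * β t + h t)) (Ici 0) t ∧
      HasDerivWithinAt a (β t * (z - a t * β t + h t)) (Ici 0) t)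
    (ht₀ : 0 ≤ t₀) (hκ : 0 < κ)
    (hhb : ∀ t, t₀ ≤ t → |h t| ≤ κ) :
    ∀ t : ℝ, t₀ + κ⁻¹ ≤ t →
      |z - a t * β t| ≤ 2 * max |z| (2 * κ) :=
  stmt_8_general z κ t₀ h a β hode ht₀ hκ hhb
end

section
/- Error control for the perturbed two-layer dynamics: for every t ≥ 0, |β(t)| ≤ λ^{1/2} exp(√2 ∫₀ᵗ (|h(s)| + |z|) ds) and |θ(t)| ≤ √2 · λ · exp(2√2 ∫₀ᵗ (|h(s)| + |z|) ds). -/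
open Real Set Filter Topology

/-!
Writing `G(t) = ∫₀ᵗ (z - θ + h)`, the sum and difference `a ± β` solve the scalar linear equations
`(a ± β)' = ± (a ± β) G'`, so `a ± β = √λ e^{± G}`. Hence `β = √λ sinh G` and `θ = λ sinh (2G) / 2`.
Since `G' = z + h - λ sinh (2G) / 2`, the term `-λ sinh (2G) / 2` always pulls `G` back towards `0`,
so `|G(t)| ≤ ∫₀ᵗ (|h| + |z|)` by a comparison argument; the bounds follow from `|sinh x| ≤ exp |x|`.
-/

theorem image_le_of_deriv_le_deriv_of_le {f f' B B' : ℝ → ℝ} {a : ℝ}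
    (hf : ∀ x ∈ Ici a, HasDerivWithinAt f (f' x) (Ici a) x)
    (hB : ∀ x ∈ Ici a, HasDerivWithinAt B (B' x) (Ici a) x) (ha : f a ≤ B a)
    (bound : ∀ x ∈ Ici a, B x ≤ f x → f' x ≤ B' x) : ∀ x ∈ Ici a, f x ≤ B x := by
  intro x hx
  have right {g g' : ℝ → ℝ} (hg : ∀ x ∈ Ici a, HasDerivWithinAt g (g' x) (Ici a) x) :
      ∀ y ∈ Ico a x, HasDerivWithinAt g (g' y) (Ici y) y :=
    fun y hy => (hg y hy.1).mono (Ici_subset_Ici.2 hy.1)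
  have cont {g g' : ℝ → ℝ} (hg : ∀ x ∈ Ici a, HasDerivWithinAt g (g' x) (Ici a) x) :
      ContinuousOn g (Icc a x) :=
    fun y hy => (hg y hy.1).continuousWithinAt.mono Icc_subset_Ici_self
  -- the barrier is raised by `ε (y - a)` to make the derivative comparison strict
  have fenced : ∀ ε > 0, f x ≤ B x + ε * (x - a) := by
    intro ε hε
    refine image_le_of_deriv_right_lt_deriv_boundary' (cont hf) (right hf)
      (B := fun y => B y + ε * (y - a)) (B' := fun y => B' y + ε) (by simpa using ha)
      ((cont hB).add (by fun_prop)) (fun y hy => ?_) (fun y hy hfy => ?_) ⟨hx, le_rfl⟩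
    · simpa using (right hB y hy).fun_add (((hasDerivWithinAt_id y _).sub_const a).const_mul ε)
    · have hBy : B y ≤ f y := by rw [hfy]; nlinarith [hy.1]
      linarith [bound y hy.1 hBy]
  have hlim : Tendsto (fun ε => B x + ε * (x - a)) (𝓝[>] 0) (𝓝 (B x)) := by
    have : Continuous fun ε => B x + ε * (x - a) := by fun_prop
    simpa using (this.tendsto 0).mono_left nhdsWithin_le_nhds
  exact ge_of_tendsto hlim (eventually_nhdsWithin_of_forall fenced)

theorem eq_mul_exp_sub_of_hasDerivWithinAt {u g G : ℝ → ℝ} {a : ℝ}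
    (hu : ∀ t ∈ Ici a, HasDerivWithinAt u (u t * g t) (Ici a) t)
    (hG : ∀ t ∈ Ici a, HasDerivWithinAt G (g t) (Ici a) t) :
    ∀ t ∈ Ici a, u t = u a * exp (G t - G a) := by
  intro t ht
  have hderiv : ∀ x ∈ Ici a, HasDerivWithinAt (fun s => u s * exp (-G s)) 0 (Ici a) x :=
    fun x hx => ((hu x hx).fun_mul (hG x hx).fun_neg.exp).congr_deriv (by ring)
  have hconst := constant_of_has_deriv_right_zero (a := a) (b := t)
    (fun x hx => (hderiv x hx.1).continuousWithinAt.mono Icc_subset_Ici_self)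
    (fun x hx => (hderiv x hx.1).mono (Ici_subset_Ici.2 hx.1)) t ⟨ht, le_rfl⟩
  calc u t = u t * exp (-G t) * exp (G t) := by
        rw [mul_assoc, ← exp_add, neg_add_cancel, exp_zero, mul_one]
    _ = u a * exp (-G a) * exp (G t) := by rw [hconst]
    _ = u a * exp (G t - G a) := by rw [mul_assoc, ← exp_add, neg_add_eq_sub]

theorem hasDerivWithinAt_integral_Ici {f : ℝ → ℝ} {a t : ℝ} (hf : ContinuousOn f (Ici a))
    (ht : t ∈ Ici a) : HasDerivWithinAt (fun u => ∫ s in a..u, f s) (f t) (Ici a) t := by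
  set F : ℝ → ℝ := fun s => f (max a s)
  have hF : Continuous F :=
    hf.comp_continuous (continuous_const.max continuous_id) fun s => le_max_left a s
  have hFf : ∀ s ∈ Ici a, F s = f s := fun s hs => congrArg f (max_eq_right hs)
  have hint : ∀ u ∈ Ici a, ∫ s in a..u, f s = ∫ s in a..u, F s := fun u hu =>
    intervalIntegral.integral_congr fun s hs =>
      (hFf s (by rw [uIcc_of_le hu] at hs; exact hs.1)).symm
  rw [← hFf t ht]
  exact (hF.integral_hasStrictDerivAt a t).hasDerivAt.hasDerivWithinAt.congr_of_mem hint ht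

theorem Real.abs_sinh_le_exp_abs (x : ℝ) : |sinh x| ≤ exp |x| := by
  rw [abs_sinh, ← cosh_add_sinh]
  linarith [cosh_pos |x|]

def SolvesPerturbedTwoLayer (z : ℝ) (h a β : ℝ → ℝ) : Prop :=
  ∀ t ∈ Ici (0 : ℝ),
    HasDerivWithinAt β (a t * (z - a t * β t + h t)) (Ici 0) t ∧
    HasDerivWithinAt a (β t * (z - a t * β t + h t)) (Ici 0) t

noncomputable def residualIntegral (z : ℝ) (h a β : ℝ → ℝ) (t : ℝ) : ℝ :=
  ∫ s in (0 : ℝ)..t, (z - a s * β s + h s)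

namespace SolvesPerturbedTwoLayer

variable {lam z : ℝ} {h a β : ℝ → ℝ}

theorem continuousOn_residual (hs : SolvesPerturbedTwoLayer z h a β)
    (hh : ContinuousOn h (Ici 0)) : ContinuousOn (fun t => z - a t * β t + h t) (Ici 0) := by
  have ha : ContinuousOn a (Ici 0) := fun t ht => (hs t ht).2.continuousWithinAt
  have hβ : ContinuousOn β (Ici 0) := fun t ht => (hs t ht).1.continuousWithinAt
  exact (continuousOn_const.sub (ha.mul hβ)).add hh

theorem hasDerivWithinAt_residualIntegral (hs : SolvesPerturbedTwoLayer z h a β)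
    (hh : ContinuousOn h (Ici 0)) {t : ℝ} (ht : t ∈ Ici 0) :
    HasDerivWithinAt (residualIntegral z h a β) (z - a t * β t + h t) (Ici 0) t :=
  hasDerivWithinAt_integral_Ici (hs.continuousOn_residual hh) ht

theorem add_eq (hs : SolvesPerturbedTwoLayer z h a β) (hh : ContinuousOn h (Ici 0))
    {t : ℝ} (ht : t ∈ Ici 0) :
    a t + β t = (a 0 + β 0) * exp (residualIntegral z h a β t) := by
  have := eq_mul_exp_sub_of_hasDerivWithinAt (u := fun t => a t + β t)
    (fun t ht => ((hs t ht).2.fun_add (hs t ht).1).congr_deriv (by ring))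
    (fun t ht => hs.hasDerivWithinAt_residualIntegral hh ht) t ht
  simpa [residualIntegral] using this

theorem sub_eq (hs : SolvesPerturbedTwoLayer z h a β) (hh : ContinuousOn h (Ici 0))
    {t : ℝ} (ht : t ∈ Ici 0) :
    a t - β t = (a 0 - β 0) * exp (-residualIntegral z h a β t) := by
  have := eq_mul_exp_sub_of_hasDerivWithinAt (u := fun t => a t - β t)
    (G := fun t => -residualIntegral z h a β t)
    (fun t ht => ((hs t ht).2.fun_sub (hs t ht).1).congr_deriv (by ring))
    (fun t ht => (hs.hasDerivWithinAt_residualIntegral hh ht).fun_neg) t ht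
  simpa [residualIntegral] using this

theorem eq_sqrt_mul_sinh (hs : SolvesPerturbedTwoLayer z h a β) (hh : ContinuousOn h (Ici 0))
    (ha0 : a 0 = √lam) (hβ0 : β 0 = 0) {t : ℝ} (ht : t ∈ Ici 0) :
    β t = √lam * sinh (residualIntegral z h a β t) := by
  have e₁ := hs.add_eq hh ht
  have e₂ := hs.sub_eq hh ht
  rw [ha0, hβ0] at e₁ e₂
  rw [sinh_eq]
  linear_combination (e₁ - e₂) / 2

theorem mul_eq_mul_sinh (hs : SolvesPerturbedTwoLayer z h a β) (hh : ContinuousOn h (Ici 0))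
    (hlam : 0 ≤ lam) (ha0 : a 0 = √lam) (hβ0 : β 0 = 0) {t : ℝ} (ht : t ∈ Ici 0) :
    a t * β t = lam * sinh (2 * residualIntegral z h a β t) / 2 := by
  set G := residualIntegral z h a β t
  have e₁ := hs.add_eq hh ht
  have e₂ := hs.sub_eq hh ht
  rw [ha0, hβ0, add_zero] at e₁
  rw [ha0, hβ0, sub_zero] at e₂
  have hsq : √lam * √lam = lam := mul_self_sqrt hlam
  rw [sinh_eq, two_mul, neg_add, exp_add, exp_add]
  linear_combination ((a t + β t + √lam * exp G) * e₁ - (a t - β t + √lam * exp (-G)) * e₂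
    + (exp G * exp G - exp (-G) * exp (-G)) * hsq) / 4

theorem abs_residualIntegral_le (hs : SolvesPerturbedTwoLayer z h a β)
    (hh : ContinuousOn h (Ici 0)) (hlam : 0 ≤ lam) (ha0 : a 0 = √lam) (hβ0 : β 0 = 0)
    {t : ℝ} (ht : 0 ≤ t) :
    |residualIntegral z h a β t| ≤ ∫ s in (0 : ℝ)..t, (|h s| + |z|) := by
  set G := residualIntegral z h a β
  set H := fun t => ∫ s in (0 : ℝ)..t, (|h s| + |z|)
  have hG : ∀ x ∈ Ici 0, HasDerivWithinAt G (z - a x * β x + h x) (Ici 0) x :=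
    fun x hx => hs.hasDerivWithinAt_residualIntegral hh hx
  have hH : ∀ x ∈ Ici 0, HasDerivWithinAt H (|h x| + |z|) (Ici 0) x :=
    fun x hx => hasDerivWithinAt_integral_Ici (hh.abs.add continuousOn_const) hx
  have hH_nonneg : ∀ x ∈ Ici 0, 0 ≤ H x := fun x hx =>
    intervalIntegral.integral_nonneg hx fun _ _ => by positivity
  have hres : ∀ x ∈ Ici 0, z - a x * β x + h x = z + h x - lam * sinh (2 * G x) / 2 :=
    fun x hx => by rw [hs.mul_eq_mul_sinh hh hlam ha0 hβ0 hx]; ring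
  have hG0 : G 0 = 0 := intervalIntegral.integral_same
  have hH0 : H 0 = 0 := intervalIntegral.integral_same
  have upper : G t ≤ H t := by
    refine image_le_of_deriv_le_deriv_of_le hG hH (by rw [hG0, hH0]) (fun x hx hHG => ?_) t ht
    have : 0 ≤ lam * sinh (2 * G x) :=
      mul_nonneg hlam (sinh_nonneg_iff.2 (by linarith [hH_nonneg x hx]))
    rw [hres x hx]
    linarith [le_abs_self z, le_abs_self (h x)]
  have lower : -G t ≤ H t := by
    refine image_le_of_deriv_le_deriv_of_le (fun x hx => (hG x hx).fun_neg) hH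
      (by rw [hG0, hH0, neg_zero]) (fun x hx hHG => ?_) t ht
    have : lam * sinh (2 * G x) ≤ 0 :=
      mul_nonpos_of_nonneg_of_nonpos hlam (sinh_nonpos_iff.2 (by linarith [hH_nonneg x hx]))
    rw [hres x hx]
    linarith [neg_abs_le z, neg_abs_le (h x)]
  exact abs_le.2 ⟨by linarith, upper⟩

end SolvesPerturbedTwoLayer

/-- Error control for the perturbed two-layer dynamics. -/
theorem stmt_9 (lam z : ℝ) (h a β : ℝ → ℝ)
    (hlam : 0 < lam) (hh : ContinuousOn h (Ici 0))
    (ha0 : a 0 = Real.sqrt lam) (hβ0 : β 0 = 0)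
    (hode : ∀ t ∈ Ici (0 : ℝ),
      HasDerivWithinAt β (a t * (z - a t * β t + h t)) (Ici 0) t ∧
      HasDerivWithinAt a (β t * (z - a t * β t + h t)) (Ici 0) t) :
    ∀ t : ℝ, 0 ≤ t →
      |β t| ≤ Real.sqrt lam *
          Real.exp (Real.sqrt 2 * ∫ s in (0 : ℝ)..t, (|h s| + |z|)) ∧
      |a t * β t| ≤ Real.sqrt 2 * lam *
          Real.exp (2 * Real.sqrt 2 * ∫ s in (0 : ℝ)..t, (|h s| + |z|)) := by
  intro t ht
  have hs : SolvesPerturbedTwoLayer z h a β := hode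
  set G := residualIntegral z h a β t
  set H := ∫ s in (0 : ℝ)..t, (|h s| + |z|)
  have hGH : |G| ≤ H := hs.abs_residualIntegral_le hh hlam.le ha0 hβ0 ht
  have hH : H ≤ √2 * H := le_mul_of_one_le_left (abs_nonneg G |>.trans hGH) one_lt_sqrt_two.le
  constructor
  · rw [hs.eq_sqrt_mul_sinh hh ha0 hβ0 ht, abs_mul, abs_of_nonneg (sqrt_nonneg _)]
    gcongr
    calc |sinh G| ≤ exp |G| := abs_sinh_le_exp_abs G
      _ ≤ exp (√2 * H) := by gcongr; linarith
  · rw [hs.mul_eq_mul_sinh hh hlam.le ha0 hβ0 ht, abs_div, abs_mul, abs_of_pos hlam, abs_two]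
    have hsinh : |sinh (2 * G)| ≤ exp (2 * √2 * H) := by
      refine (abs_sinh_le_exp_abs _).trans (exp_le_exp.2 ?_)
      rw [abs_mul, abs_two]
      linarith
    calc lam * |sinh (2 * G)| / 2 ≤ lam * exp (2 * √2 * H) := by
          nlinarith [abs_nonneg (sinh (2 * G))]
      _ ≤ √2 * (lam * exp (2 * √2 * H)) :=
          le_mul_of_one_le_left (by positivity) one_lt_sqrt_two.le
      _ = √2 * lam * exp (2 * √2 * H) := by ring
end

section
/- Approaching from above for the perturbed multilayer dynamics: assume z ≥ 0, let t₀ ≥ 0, suppose |h(t)| ≤ κ for all t ≥ t₀ for some κ > 0, and suppose θ(t₀) ≥ z. Then, writing m = 2·max(z, 2κ), one has |z − θ(t)| ≤ m for all t ≥ t₀ + ((D+2)/(D+1)) · D^{D/(D+2)} · m^{−(2D+2)/(D+2)}. -/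
/-
The end-to-end parameter θ = a b^D β obeys θ' = S (z - θ + h) with a rate S ≥ 0, and the conserved
quantity b² - D β² = b(0)² ≥ 0 bounds the rate below: S^(D+2) ≥ D^D θ^(2D+2). As |h| ≤ κ, the
levels z - κ and z + m are barriers that θ cannot cross from above resp. below. While θ - z > m the
drift z - θ + h is at most -(θ - z)/2, so V = (θ - z)^(-q), q = (2D+2)/(D+2), grows at rate at least
q D^(D/(D+2))/2; since V < m^(-q) throughout, θ must reach z + m within the stated time.
-/

open Real Set

theorem le_of_hasDerivWithinAt_Ici_of_nonneg_below {f f' : ℝ → ℝ} {a c : ℝ}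
    (hf : ∀ t ∈ Ici a, HasDerivWithinAt f (f' t) (Ici a) t) (ha : c ≤ f a)
    (hf' : ∀ t ∈ Ici a, f t < c → 0 ≤ f' t) : ∀ t ∈ Ici a, c ≤ f t := by
  intro t ht
  -- fence `c - ε (s - a + 1)`: `f` could only cross it while below `c`, where `f' ≥ 0 > -ε`
  have hfence : ∀ ε > 0, c - ε * (t - a + 1) ≤ f t := by
    intro ε hε
    refine image_le_of_deriv_right_lt_deriv_boundary' (f := fun s => c - ε * (s - a + 1))
      (f' := fun _ => -ε) (by fun_prop)
      (fun s _ => ((((hasDerivWithinAt_id s _).sub_const a).add_const 1).const_mul ε).const_sub c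
        |>.congr_deriv (by ring))
      (by linarith) (fun s hs => (hf s hs.1).continuousWithinAt.mono Icc_subset_Ici_self)
      (fun s hs => (hf s hs.1).mono (Ici_subset_Ici.2 hs.1)) ?_ ⟨ht, le_rfl⟩
    intro s hs hfs
    have : f s < c := by rw [← hfs]; nlinarith [hs.1]
    linarith [hf' s hs.1 this]
  refine le_of_forall_pos_le_add fun ε hε => ?_
  have hta : 0 < t - a + 1 := by linarith [mem_Ici.1 ht]
  have := hfence (ε / (t - a + 1)) (by positivity)
  rw [div_mul_cancel₀ _ hta.ne'] at this
  linarith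

theorem exists_le_of_hasDerivWithinAt_le_neg_rpow {g g' : ℝ → ℝ} {a m k p T : ℝ}
    (hm : 0 < m) (hp : 0 < p) (hT₀ : 0 ≤ T) (hT : m ^ (-p) ≤ p * k * T)
    (hg : ∀ t ∈ Ici a, HasDerivWithinAt g (g' t) (Ici a) t)
    (hg' : ∀ t ∈ Ici a, m < g t → g' t ≤ -k * g t ^ (p + 1)) :
    ∃ t ∈ Icc a (a + T), g t ≤ m := by
  by_contra! hbig
  have hgrow : ∀ t ∈ Icc a (a + T), g a ^ (-p) + p * k * (t - a) ≤ g t ^ (-p) := by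
    have hpos : ∀ t ∈ Icc a (a + T), 0 < g t := fun t ht => hm.trans (hbig t ht)
    have hV : ∀ t ∈ Icc a (a + T), HasDerivWithinAt (fun s => g s ^ (-p))
        (g' t * -p * g t ^ (-p - 1)) (Ici a) t :=
      fun t ht => (hg t ht.1).rpow_const (Or.inl (hpos t ht).ne')
    refine image_le_of_deriv_right_le_deriv_boundary (f' := fun _ => p * k) (by fun_prop)
      (fun s _ => (((hasDerivWithinAt_id s _).sub_const a).const_mul (p * k)).const_add _
        |>.congr_deriv (by ring))
      (by simp) (fun s hs => (hV s hs).continuousWithinAt.mono Icc_subset_Ici_self)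
      (fun s hs => (hV s (Ico_subset_Icc_self hs)).mono (Ici_subset_Ici.2 hs.1)) ?_
    intro s hs
    have hs' := Ico_subset_Icc_self hs
    have hgs := hpos s hs'
    have hcancel : g s ^ (p + 1) * g s ^ (-p - 1) = 1 := by
      rw [← rpow_add hgs]; norm_num
    calc p * k = p * g s ^ (-p - 1) * (k * g s ^ (p + 1)) := by
          linear_combination (-(p * k)) * hcancel
      _ ≤ p * g s ^ (-p - 1) * -g' s := by
          gcongr; linarith [hg' s hs.1 (hbig s hs')]
      _ = g' s * -p * g s ^ (-p - 1) := by ring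
  have hend := hgrow (a + T) ⟨by linarith, le_rfl⟩
  have hlt : g (a + T) ^ (-p) < m ^ (-p) :=
    rpow_lt_rpow_of_neg hm (hbig _ ⟨by linarith, le_rfl⟩) (by linarith)
  have : 0 ≤ g a ^ (-p) := rpow_nonneg (hm.le.trans (hbig a ⟨le_rfl, by linarith⟩).le) _
  nlinarith

def effectiveRate (D : ℕ) (x y w : ℝ) : ℝ :=
  (y ^ D) ^ 2 * w ^ 2 + (D : ℝ) ^ 2 * x ^ 2 * (y ^ (D - 1)) ^ 2 * w ^ 2 + x ^ 2 * (y ^ D) ^ 2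

theorem effectiveRate_nonneg (D : ℕ) (x y w : ℝ) : 0 ≤ effectiveRate D x y w := by
  unfold effectiveRate; positivity

theorem natCast_pow_mul_pow_le_effectiveRate_pow {D : ℕ} {x y w : ℝ} (hyw : D * w ^ 2 ≤ y ^ 2) :
    (D : ℝ) ^ D * (x * y ^ D * w) ^ (2 * D + 2) ≤ effectiveRate D x y w ^ (D + 2) := by
  have hS := effectiveRate_nonneg D x y w
  have hx : x ^ 2 * (y ^ D) ^ 2 ≤ effectiveRate D x y w := by
    unfold effectiveRate; nlinarith [sq_nonneg (D * x * y ^ (D - 1) * w), sq_nonneg (y ^ D * w)]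
  have hw : (D : ℝ) ^ D * (w ^ 2) ^ (D + 1) ≤ effectiveRate D x y w :=
    calc (D : ℝ) ^ D * (w ^ 2) ^ (D + 1) = (D * w ^ 2) ^ D * w ^ 2 := by ring
      _ ≤ (y ^ 2) ^ D * w ^ 2 := by gcongr
      _ = (y ^ D) ^ 2 * w ^ 2 := by ring
      _ ≤ effectiveRate D x y w := by
        unfold effectiveRate; nlinarith [sq_nonneg (D * x * y ^ (D - 1) * w), sq_nonneg (x * y ^ D)]
  calc (D : ℝ) ^ D * (x * y ^ D * w) ^ (2 * D + 2)
      = (x ^ 2 * (y ^ D) ^ 2) ^ (D + 1) * ((D : ℝ) ^ D * (w ^ 2) ^ (D + 1)) := by ring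
    _ ≤ effectiveRate D x y w ^ (D + 1) * effectiveRate D x y w := by gcongr
    _ = effectiveRate D x y w ^ (D + 2) := by ring

theorem natCast_rpow_mul_rpow_le_effectiveRate {D : ℕ} {x y w : ℝ} (hyw : D * w ^ 2 ≤ y ^ 2)
    (hθ : 0 ≤ x * y ^ D * w) :
    (D : ℝ) ^ ((D : ℝ) / (D + 2)) * (x * y ^ D * w) ^ ((2 * (D : ℝ) + 2) / (D + 2)) ≤
      effectiveRate D x y w := by
  have hD : (D + 2 : ℕ) ≠ 0 := by omega
  have key := rpow_le_rpow (by positivity) (natCast_pow_mul_pow_le_effectiveRate_pow (x := x) hyw)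
    (inv_nonneg.2 (Nat.cast_nonneg (D + 2)))
  rw [pow_rpow_inv_natCast (effectiveRate_nonneg D x y w) hD,
    mul_rpow (by positivity) (by positivity), ← rpow_natCast, ← rpow_natCast (x * y ^ D * w),
    ← rpow_mul (by positivity), ← rpow_mul hθ] at key
  convert key using 3 <;> push_cast <;> ring

theorem one_le_natCast_rpow_div (D : ℕ) : 1 ≤ (D : ℝ) ^ ((D : ℝ) / (D + 2)) := by
  rcases D.eq_zero_or_pos with rfl | hD
  · simp
  · exact one_le_rpow (Nat.one_le_cast.2 hD) (by positivity)

def IsPerturbedFlow (D : ℕ) (z : ℝ) (h a b β : ℝ → ℝ) : Prop :=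
  ∀ t ∈ Ici (0 : ℝ),
    HasDerivWithinAt a
      (b t ^ D * β t * (z - a t * b t ^ D * β t + h t)) (Ici 0) t ∧
    HasDerivWithinAt b
      ((D : ℝ) * a t * b t ^ (D - 1) * β t * (z - a t * b t ^ D * β t + h t)) (Ici 0) t ∧
    HasDerivWithinAt β
      (a t * b t ^ D * (z - a t * b t ^ D * β t + h t)) (Ici 0) t

def endToEnd (D : ℕ) (a b β : ℝ → ℝ) (t : ℝ) : ℝ := a t * b t ^ D * β t

theorem natCast_mul_mul_pow_sub_one (n : ℕ) (x : ℝ) : (n : ℝ) * (x * x ^ (n - 1)) = n * x ^ n := by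
  rcases n with _ | n <;> simp [pow_succ, mul_comm]

namespace IsPerturbedFlow

variable {D : ℕ} {z : ℝ} {h a b β : ℝ → ℝ}

theorem hasDerivWithinAt_endToEnd (hf : IsPerturbedFlow D z h a b β) {t : ℝ} (ht : t ∈ Ici 0) :
    HasDerivWithinAt (endToEnd D a b β)
      (effectiveRate D (a t) (b t) (β t) * (z - endToEnd D a b β t + h t)) (Ici 0) t := by
  obtain ⟨ha, hb, hβ⟩ := hf t ht
  exact ((ha.fun_mul (hb.fun_pow D)).fun_mul hβ).congr_deriv
    (by unfold effectiveRate endToEnd; ring)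

theorem sq_sub_natCast_mul_sq (hf : IsPerturbedFlow D z h a b β) {t : ℝ} (ht : t ∈ Ici 0) :
    b t ^ 2 - D * β t ^ 2 = b 0 ^ 2 - D * β 0 ^ 2 := by
  have hderiv : ∀ s ∈ Ici (0 : ℝ),
      HasDerivWithinAt (fun s => b s ^ 2 - D * β s ^ 2) 0 (Ici 0) s := by
    intro s hs
    obtain ⟨-, hb, hβ⟩ := hf s hs
    refine ((hb.pow 2).sub ((hβ.pow 2).const_mul (D : ℝ))).congr_deriv ?_
    linear_combination (2 * a s * β s * (z - a s * b s ^ D * β s + h s)) *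
      natCast_mul_mul_pow_sub_one D (b s)
  exact constant_of_has_deriv_right_zero
    (fun s hs => (hderiv s hs.1).continuousWithinAt.mono Icc_subset_Ici_self)
    (fun s hs => (hderiv s hs.1).mono (Ici_subset_Ici.2 hs.1)) t ⟨ht, le_rfl⟩

theorem natCast_mul_sq_le_sq (hf : IsPerturbedFlow D z h a b β) (hβ0 : β 0 = 0) {t : ℝ}
    (ht : t ∈ Ici 0) : D * β t ^ 2 ≤ b t ^ 2 := by
  have := hf.sq_sub_natCast_mul_sq ht
  rw [hβ0] at this
  nlinarith [sq_nonneg (b 0)]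

theorem sub_le_endToEnd (hf : IsPerturbedFlow D z h a b β) {κ t₀ : ℝ} (ht₀ : 0 ≤ t₀)
    (hhb : ∀ t ≥ t₀, |h t| ≤ κ) (hinit : z - κ ≤ endToEnd D a b β t₀) :
    ∀ t ≥ t₀, z - κ ≤ endToEnd D a b β t :=
  le_of_hasDerivWithinAt_Ici_of_nonneg_below
    (fun t ht => (hf.hasDerivWithinAt_endToEnd (ht₀.trans ht)).mono (Ici_subset_Ici.2 ht₀))
    hinit fun t ht hlt => mul_nonneg (effectiveRate_nonneg _ _ _ _)
      (by linarith [neg_abs_le (h t), hhb t ht])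

theorem endToEnd_le (hf : IsPerturbedFlow D z h a b β) {κ c s : ℝ} (hs : 0 ≤ s) (hκc : κ ≤ c)
    (hhb : ∀ t ≥ s, |h t| ≤ κ) (hinit : endToEnd D a b β s ≤ z + c) :
    ∀ t ≥ s, endToEnd D a b β t ≤ z + c := by
  have := le_of_hasDerivWithinAt_Ici_of_nonneg_below (f := fun t => -endToEnd D a b β t)
    (fun t ht => ((hf.hasDerivWithinAt_endToEnd (hs.trans ht)).mono (Ici_subset_Ici.2 hs)).neg)
    (neg_le_neg hinit) fun t ht hlt => neg_nonneg.2 <| mul_nonpos_of_nonneg_of_nonpos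
      (effectiveRate_nonneg _ _ _ _) (by linarith [le_abs_self (h t), hhb t ht])
  exact fun t ht => neg_le_neg_iff.1 (this t ht)

theorem effectiveRate_mul_le_neg_rpow (hf : IsPerturbedFlow D z h a b β) (hβ0 : β 0 = 0)
    (hz : 0 ≤ z) {κ m t : ℝ} (ht : 0 ≤ t) (hκm : 2 * κ ≤ m) (hht : |h t| ≤ κ)
    (hmt : m < endToEnd D a b β t - z) :
    effectiveRate D (a t) (b t) (β t) * (z - endToEnd D a b β t + h t) ≤
      -((D : ℝ) ^ ((D : ℝ) / (D + 2)) / 2) *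
        (endToEnd D a b β t - z) ^ ((2 * (D : ℝ) + 2) / (D + 2) + 1) := by
  set g := endToEnd D a b β t - z
  have hg : 0 < g := by linarith [(abs_nonneg (h t)).trans hht]
  have hgθ : g ≤ endToEnd D a b β t := by linarith
  have hrate : (D : ℝ) ^ ((D : ℝ) / (D + 2)) * g ^ ((2 * (D : ℝ) + 2) / (D + 2)) ≤
      effectiveRate D (a t) (b t) (β t) :=
    (mul_le_mul_of_nonneg_left (rpow_le_rpow hg.le hgθ (by positivity))
      (by positivity)).trans
      (natCast_rpow_mul_rpow_le_effectiveRate (hf.natCast_mul_sq_le_sq hβ0 ht)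
        (show 0 ≤ endToEnd D a b β t by linarith))
  have hdrift : z - endToEnd D a b β t + h t ≤ -(g / 2) := by linarith [le_abs_self (h t)]
  calc effectiveRate D (a t) (b t) (β t) * (z - endToEnd D a b β t + h t)
      ≤ effectiveRate D (a t) (b t) (β t) * -(g / 2) :=
        mul_le_mul_of_nonneg_left hdrift (effectiveRate_nonneg _ _ _ _)
    _ ≤ (D : ℝ) ^ ((D : ℝ) / (D + 2)) * g ^ ((2 * (D : ℝ) + 2) / (D + 2)) * -(g / 2) :=
        mul_le_mul_of_nonpos_right hrate (by linarith)
    _ = _ := by rw [rpow_add_one hg.ne']; ring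

theorem exists_endToEnd_le (hf : IsPerturbedFlow D z h a b β) (hβ0 : β 0 = 0) (hz : 0 ≤ z)
    {κ m t₀ : ℝ} (ht₀ : 0 ≤ t₀) (hm : 0 < m) (hκm : 2 * κ ≤ m) (hhb : ∀ t ≥ t₀, |h t| ≤ κ) :
    ∃ s ∈ Icc t₀ (t₀ + ((D : ℝ) + 2) / ((D : ℝ) + 1) * (D : ℝ) ^ ((D : ℝ) / ((D : ℝ) + 2)) *
        m ^ (-(2 * (D : ℝ) + 2) / ((D : ℝ) + 2))), endToEnd D a b β s ≤ z + m := by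
  rw [neg_div]
  set c := (D : ℝ) ^ ((D : ℝ) / (D + 2))
  set q := (2 * (D : ℝ) + 2) / (D + 2) with hq_def
  have hc : 1 ≤ c := one_le_natCast_rpow_div D
  have hcT : q * (c / 2) * ((D + 2) / (D + 1) * c * m ^ (-q)) = c * c * m ^ (-q) := by
    rw [hq_def]; field_simp
  obtain ⟨s, hs, hθs⟩ := exists_le_of_hasDerivWithinAt_le_neg_rpow
    (g := fun t => endToEnd D a b β t - z) (k := c / 2) (p := q)
    (T := (D + 2) / (D + 1) * c * m ^ (-q)) hm (by positivity) (by positivity)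
    (by rw [hcT]; exact le_mul_of_one_le_left (rpow_pos_of_pos hm _).le (by nlinarith))
    (fun t ht => ((hf.hasDerivWithinAt_endToEnd (ht₀.trans ht)).mono
      (Ici_subset_Ici.2 ht₀)).sub_const z)
    (fun t ht hmt => hf.effectiveRate_mul_le_neg_rpow hβ0 hz (ht₀.trans ht) hκm (hhb t ht) hmt)
  exact ⟨s, hs, by linarith⟩

end IsPerturbedFlow

theorem stmt_12_general (D : ℕ) (z κ t₀ : ℝ) (h a b β : ℝ → ℝ)
    (hβ0 : β 0 = 0)
    (hode : ∀ t ∈ Ici (0 : ℝ),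
      HasDerivWithinAt a
        (b t ^ D * β t * (z - a t * b t ^ D * β t + h t)) (Ici 0) t ∧
      HasDerivWithinAt b
        ((D : ℝ) * a t * b t ^ (D - 1) * β t * (z - a t * b t ^ D * β t + h t)) (Ici 0) t ∧
      HasDerivWithinAt β
        (a t * b t ^ D * (z - a t * b t ^ D * β t + h t)) (Ici 0) t)
    (hz : 0 ≤ z) (ht₀ : 0 ≤ t₀) (hκ : 0 < κ)
    (hhb : ∀ t, t₀ ≤ t → |h t| ≤ κ)
    (hinit : z ≤ a t₀ * b t₀ ^ D * β t₀) :
    ∀ t : ℝ, t₀ + ((D : ℝ) + 2) / ((D : ℝ) + 1) * (D : ℝ) ^ ((D : ℝ) / ((D : ℝ) + 2)) *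
        (2 * max z (2 * κ)) ^ (-(2 * (D : ℝ) + 2) / ((D : ℝ) + 2)) ≤ t →
      |z - a t * b t ^ D * β t| ≤ 2 * max z (2 * κ) := by
  intro t ht
  have hflow : IsPerturbedFlow D z h a b β := hode
  set m := 2 * max z (2 * κ)
  have hκm : 4 * κ ≤ m := by linarith [le_max_right z (2 * κ)]
  obtain ⟨s, hs, hθs⟩ :=
    hflow.exists_endToEnd_le (m := m) hβ0 hz ht₀ (by linarith) (by linarith) hhb
  have hlow : z - κ ≤ endToEnd D a b β t :=
    hflow.sub_le_endToEnd ht₀ hhb (by unfold endToEnd; linarith) t (by linarith [hs.1, hs.2])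
  have hup : endToEnd D a b β t ≤ z + m :=
    hflow.endToEnd_le (ht₀.trans hs.1) (by linarith) (fun r hr => hhb r (hs.1.trans hr)) hθs t
      (by linarith [hs.2])
  unfold endToEnd at hlow hup
  rw [abs_le]
  constructor <;> linarith

/-- Approaching from above for the perturbed multilayer dynamics. -/
theorem stmt_12 (D : ℕ) (lam b0 z κ t₀ : ℝ) (h a b β : ℝ → ℝ)
    (hD : 1 ≤ D) (hlam : 0 < lam) (hb0pos : 0 < b0)
    (hh : ContinuousOn h (Ici 0))
    (ha0 : a 0 = Real.sqrt lam) (hbinit : b 0 = b0) (hβ0 : β 0 = 0)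
    (hode : ∀ t ∈ Ici (0 : ℝ),
      HasDerivWithinAt a
        (b t ^ D * β t * (z - a t * b t ^ D * β t + h t)) (Ici 0) t ∧
      HasDerivWithinAt b
        ((D : ℝ) * a t * b t ^ (D - 1) * β t * (z - a t * b t ^ D * β t + h t)) (Ici 0) t ∧
      HasDerivWithinAt β
        (a t * b t ^ D * (z - a t * b t ^ D * β t + h t)) (Ici 0) t)
    (hz : 0 ≤ z) (ht₀ : 0 ≤ t₀) (hκ : 0 < κ)
    (hhb : ∀ t, t₀ ≤ t → |h t| ≤ κ)
    (hinit : z ≤ a t₀ * b t₀ ^ D * β t₀) :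
    ∀ t : ℝ, t₀ + ((D : ℝ) + 2) / ((D : ℝ) + 1) * (D : ℝ) ^ ((D : ℝ) / ((D : ℝ) + 2)) *
        (2 * max z (2 * κ)) ^ (-(2 * (D : ℝ) + 2) / ((D : ℝ) + 2)) ≤ t →
      |z - a t * b t ^ D * β t| ≤ 2 * max z (2 * κ) :=
  stmt_12_general D z κ t₀ h a b β hβ0 hode hz ht₀ hκ hhb hinit
end

section
/- Retracting from the negative for the perturbed multilayer dynamics: assume z ≥ 0, let t₀ ≥ 0, and suppose |h(t)| ≤ κ for all t ≥ t₀ for some κ > 0. Then θ(t) ≥ −2κ for all t ≥ t₀ + ((D+2)/(D+1)) · D^{D/(D+2)} · (2κ)^{−(2D+2)/(D+2)}. -/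
open Real Set

/-!
The dynamics is the gradient flow of `θ = a b^D β` scaled by the residual `z - θ + h`, so
`θ' = |∇θ|² (z - θ + h)`. The conserved quantities `a² - β²` and `b² - D a²` give `β² ≤ a²` and
`D β² ≤ b²`, whence `|∇θ|² ≥ (a b^D)² ≥ D^p |θ|^r` with `p = D/(D+2)`, `r = (2D+2)/(D+2)`.
While `θ < -2κ` the residual exceeds `|θ|/2`, so `u = -θ` satisfies `u' ≤ -(D^p/2) u^(r+1)` and
`u^(-r)` grows at rate at least `r D^p/2`; since `u^(-r) < (2κ)^(-r)`, this bounds the time spent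
below `-2κ`. Once `θ ≥ -2κ` it stays so, because at `θ = -2κ` the residual is at least `κ > 0`.
-/

def IsPerturbedMultilayerFlow (D : ℕ) (z : ℝ) (h a b β : ℝ → ℝ) : Prop :=
  ∀ t ∈ Ici (0 : ℝ),
    HasDerivWithinAt a
      (b t ^ D * β t * (z - a t * b t ^ D * β t + h t)) (Ici 0) t ∧
    HasDerivWithinAt b
      ((D : ℝ) * a t * b t ^ (D - 1) * β t * (z - a t * b t ^ D * β t + h t)) (Ici 0) t ∧
    HasDerivWithinAt β
      (a t * b t ^ D * (z - a t * b t ^ D * β t + h t)) (Ici 0) t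

def gradNormSq (D : ℕ) (a b β : ℝ → ℝ) (t : ℝ) : ℝ :=
  (b t ^ D * β t) ^ 2 + (D * a t * b t ^ (D - 1) * β t) ^ 2 + (a t * b t ^ D) ^ 2

theorem natCast_mul_pow_pred_mul_self (D : ℕ) (x : ℝ) :
    (D : ℝ) * x ^ (D - 1) * x = D * x ^ D := by
  rcases D with _ | D
  · simp
  · simp only [Nat.add_sub_cancel, pow_succ]; ring

theorem eq_of_hasDerivWithinAt_Ici_zero {f : ℝ → ℝ}
    (hf : ∀ t ∈ Ici (0 : ℝ), HasDerivWithinAt f 0 (Ici 0) t) {t : ℝ} (ht : 0 ≤ t) :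
    f t = f 0 :=
  constant_of_has_deriv_right_zero
    (fun x hx => (hf x hx.1).continuousWithinAt.mono Icc_subset_Ici_self)
    (fun x hx => (hf x hx.1).mono (Ici_subset_Ici.2 hx.1)) t ⟨ht, le_rfl⟩

theorem natCast_pow_mul_abs_pow_le (D : ℕ) {x y w : ℝ} (hwx : w ^ 2 ≤ x ^ 2)
    (hwy : D * w ^ 2 ≤ y ^ 2) :
    (D : ℝ) ^ D * |x * y ^ D * w| ^ (2 * D + 2) ≤ ((x * y ^ D) ^ 2) ^ (D + 2) :=
  calc (D : ℝ) ^ D * |x * y ^ D * w| ^ (2 * D + 2)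
      = w ^ 2 * (D * w ^ 2) ^ D * ((x * y ^ D) ^ 2) ^ (D + 1) := by
        rw [show 2 * D + 2 = 2 * (D + 1) by ring, pow_mul, sq_abs]; ring
    _ ≤ x ^ 2 * (y ^ 2) ^ D * ((x * y ^ D) ^ 2) ^ (D + 1) := by
        have : 0 ≤ (D : ℝ) * w ^ 2 := by positivity
        gcongr
    _ = ((x * y ^ D) ^ 2) ^ (D + 2) := by ring

theorem natCast_rpow_mul_abs_rpow_le (D : ℕ) {x y w : ℝ} (hwx : w ^ 2 ≤ x ^ 2)
    (hwy : D * w ^ 2 ≤ y ^ 2) :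
    (D : ℝ) ^ ((D : ℝ) / (D + 2)) * |x * y ^ D * w| ^ ((2 * (D : ℝ) + 2) / (D + 2)) ≤
      (x * y ^ D) ^ 2 := by
  refine (pow_le_pow_iff_left₀ (by positivity) (by positivity) (n := D + 2) (by omega)).1 ?_
  have hD2 : (D : ℝ) + 2 ≠ 0 := by positivity
  rw [mul_pow, ← rpow_mul_natCast (Nat.cast_nonneg D), ← rpow_mul_natCast (abs_nonneg _),
    Nat.cast_add, Nat.cast_two, div_mul_cancel₀ _ hD2, div_mul_cancel₀ _ hD2]
  exact_mod_cast natCast_pow_mul_abs_pow_le D hwx hwy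

theorem rpow_neg_add_mul_le_rpow_neg {u u' : ℝ → ℝ} {k r t₀ T : ℝ} (hr : 0 ≤ r)
    (hT : t₀ ≤ T) (hpos : ∀ x ∈ Icc t₀ T, 0 < u x) (hcont : ContinuousOn u (Icc t₀ T))
    (hderiv : ∀ x ∈ Ico t₀ T, HasDerivWithinAt u (u' x) (Ici x) x)
    (hbound : ∀ x ∈ Ico t₀ T, u' x ≤ -(k * u x ^ r * u x)) :
    u t₀ ^ (-r) + r * k * (T - t₀) ≤ u T ^ (-r) := by
  refine image_le_of_deriv_right_le_deriv_boundary (f' := fun _ => r * k * 1)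
    (B' := fun x => u' x * -r * u x ^ (-r - 1)) (by fun_prop)
    (fun x _ => (((hasDerivWithinAt_id x _).sub_const t₀).const_mul _).const_add _)
    (by simp) (hcont.rpow_const fun x hx => Or.inl (hpos x hx).ne')
    (fun x hx => (hderiv x hx).rpow_const (Or.inl (hpos x (Ico_subset_Icc_self hx)).ne'))
    (fun x hx => ?_) ⟨hT, le_rfl⟩
  have hux := hpos x (Ico_subset_Icc_self hx)
  have hone : u x ^ r * u x * u x ^ (-r - 1) = 1 := by
    rw [mul_right_comm, ← rpow_add hux, show r + (-r - 1) = -1 by ring, rpow_neg_one,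
      inv_mul_cancel₀ hux.ne']
  have hw : 0 ≤ r * u x ^ (-r - 1) := by positivity
  calc r * k * 1 = -(k * u x ^ r * u x) * -r * u x ^ (-r - 1) := by
        linear_combination (-(r * k)) * hone
    _ ≤ u' x * -r * u x ^ (-r - 1) := by nlinarith [hbound x hx]

namespace IsPerturbedMultilayerFlow

variable {D : ℕ} {z : ℝ} {h a b β : ℝ → ℝ}

theorem hasDerivWithinAt_endToEnd (hf : IsPerturbedMultilayerFlow D z h a b β) {t : ℝ}
    (ht : 0 ≤ t) :
    HasDerivWithinAt (endToEnd D a b β)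
      (gradNormSq D a b β t * (z - endToEnd D a b β t + h t)) (Ici 0) t := by
  obtain ⟨ha, hb, hβ⟩ := hf t ht
  refine ((ha.mul (hb.pow D)).mul hβ).congr_deriv ?_
  simp only [endToEnd, gradNormSq, Pi.mul_apply, Pi.pow_apply]
  ring

theorem sq_sub_sq_eq (hf : IsPerturbedMultilayerFlow D z h a b β) {t : ℝ} (ht : 0 ≤ t) :
    a t ^ 2 - β t ^ 2 = a 0 ^ 2 - β 0 ^ 2 :=
  eq_of_hasDerivWithinAt_Ici_zero (f := fun t => a t ^ 2 - β t ^ 2) (fun s hs => by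
    obtain ⟨ha, -, hβ⟩ := hf s hs
    exact ((ha.pow 2).sub (hβ.pow 2)).congr_deriv (by push_cast; ring)) ht

theorem sq_sub_natCast_mul_sq_eq (hf : IsPerturbedMultilayerFlow D z h a b β) {t : ℝ}
    (ht : 0 ≤ t) : b t ^ 2 - D * a t ^ 2 = b 0 ^ 2 - D * a 0 ^ 2 :=
  eq_of_hasDerivWithinAt_Ici_zero (f := fun t => b t ^ 2 - D * a t ^ 2) (fun s hs => by
    obtain ⟨ha, hb, -⟩ := hf s hs
    refine ((hb.pow 2).sub ((ha.pow 2).const_mul _)).congr_deriv ?_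
    have hpow := natCast_mul_pow_pred_mul_self D (b s)
    push_cast
    linear_combination (2 * a s * β s * (z - a s * b s ^ D * β s + h s)) * hpow) ht

theorem sq_le_sq_and_natCast_mul_sq_le_sq (hf : IsPerturbedMultilayerFlow D z h a b β)
    (hβ0 : β 0 = 0) {t : ℝ} (ht : 0 ≤ t) : β t ^ 2 ≤ a t ^ 2 ∧ D * β t ^ 2 ≤ b t ^ 2 := by
  have ha := hf.sq_sub_sq_eq ht
  have hb := hf.sq_sub_natCast_mul_sq_eq ht
  rw [hβ0] at ha
  constructor <;> nlinarith [sq_nonneg (a 0), sq_nonneg (b 0)]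

theorem natCast_rpow_mul_abs_rpow_le_gradNormSq (hf : IsPerturbedMultilayerFlow D z h a b β)
    (hβ0 : β 0 = 0) {t : ℝ} (ht : 0 ≤ t) :
    (D : ℝ) ^ ((D : ℝ) / (D + 2)) * |endToEnd D a b β t| ^ ((2 * (D : ℝ) + 2) / (D + 2)) ≤
      gradNormSq D a b β t := by
  obtain ⟨hβa, hβb⟩ := hf.sq_le_sq_and_natCast_mul_sq_le_sq hβ0 ht
  refine (natCast_rpow_mul_abs_rpow_le D hβa hβb).trans ?_
  unfold gradNormSq
  nlinarith [sq_nonneg (b t ^ D * β t), sq_nonneg (D * a t * b t ^ (D - 1) * β t)]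

theorem continuousOn_endToEnd (hf : IsPerturbedMultilayerFlow D z h a b β) :
    ContinuousOn (endToEnd D a b β) (Ici 0) :=
  fun _ ht => (hf.hasDerivWithinAt_endToEnd ht).continuousWithinAt

theorem le_gradNormSq_mul_of_le_neg_two_mul (hf : IsPerturbedMultilayerFlow D z h a b β)
    (hβ0 : β 0 = 0) (hz : 0 ≤ z) {κ x : ℝ} (hx : 0 ≤ x) (hhx : |h x| ≤ κ)
    (hθ : endToEnd D a b β x ≤ -(2 * κ)) :
    (D : ℝ) ^ ((D : ℝ) / (D + 2)) / 2 *
        (-endToEnd D a b β x) ^ ((2 * (D : ℝ) + 2) / (D + 2)) * -endToEnd D a b β x ≤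
      gradNormSq D a b β x * (z - endToEnd D a b β x + h x) := by
  have hκ : 0 ≤ κ := (abs_nonneg _).trans hhx
  have hgrad := hf.natCast_rpow_mul_abs_rpow_le_gradNormSq hβ0 hx
  rw [abs_of_nonpos (by linarith)] at hgrad
  have hres : -endToEnd D a b β x / 2 ≤ z - endToEnd D a b β x + h x := by
    linarith [(abs_le.1 hhx).1]
  calc _ = (D : ℝ) ^ ((D : ℝ) / (D + 2)) *
          (-endToEnd D a b β x) ^ ((2 * (D : ℝ) + 2) / (D + 2)) * (-endToEnd D a b β x / 2) := by
        ring
    _ ≤ _ := mul_le_mul hgrad hres (by linarith) (by unfold gradNormSq; positivity)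

variable {κ t₀ : ℝ}

theorem neg_two_mul_le_endToEnd_of_le (hf : IsPerturbedMultilayerFlow D z h a b β)
    (hβ0 : β 0 = 0) (hz : 0 ≤ z) (hκ : 0 < κ) (hhb : ∀ t, t₀ ≤ t → |h t| ≤ κ)
    (ht₀ : 0 ≤ t₀) {s t : ℝ} (hs : t₀ ≤ s) (hθs : -(2 * κ) ≤ endToEnd D a b β s)
    (hst : s ≤ t) : -(2 * κ) ≤ endToEnd D a b β t := by
  refine image_le_of_deriv_right_lt_deriv_boundary' (f' := fun _ => 0) continuousOn_const
    (fun x _ => hasDerivWithinAt_const _ _ _) hθs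
    (hf.continuousOn_endToEnd.mono fun x hx => ht₀.trans (hs.trans hx.1))
    (fun x hx => (hf.hasDerivWithinAt_endToEnd (ht₀.trans (hs.trans hx.1))).mono
      (Ici_subset_Ici.2 (ht₀.trans (hs.trans hx.1))))
    (fun x hx hθx => ?_) ⟨hst, le_rfl⟩
  have hderiv := hf.le_gradNormSq_mul_of_le_neg_two_mul hβ0 hz (ht₀.trans (hs.trans hx.1))
    (hhb x (hs.trans hx.1)) hθx.ge
  have hDp := zero_lt_one.trans_le (one_le_natCast_rpow_div D)
  refine lt_of_lt_of_le ?_ hderiv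
  rw [← hθx, neg_neg]
  positivity

theorem exists_neg_two_mul_le_endToEnd (hf : IsPerturbedMultilayerFlow D z h a b β)
    (hβ0 : β 0 = 0) (hz : 0 ≤ z) (hκ : 0 < κ) (hhb : ∀ t, t₀ ≤ t → |h t| ≤ κ)
    (ht₀ : 0 ≤ t₀) :
    ∃ s ∈ Icc t₀ (t₀ + ((D : ℝ) + 2) / ((D : ℝ) + 1) * (D : ℝ) ^ ((D : ℝ) / ((D : ℝ) + 2)) *
        (2 * κ) ^ (-(2 * (D : ℝ) + 2) / ((D : ℝ) + 2))),
      -(2 * κ) ≤ endToEnd D a b β s := by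
  rw [neg_div]
  set p : ℝ := (D : ℝ) / (D + 2)
  set r : ℝ := (2 * (D : ℝ) + 2) / (D + 2)
  set T := t₀ + (D + 2) / (D + 1) * (D : ℝ) ^ p * (2 * κ) ^ (-r)
  by_contra! hu
  have hr : 0 < r := by positivity
  have hDp := one_le_natCast_rpow_div D
  have htT : t₀ ≤ T := le_add_of_nonneg_right (by positivity)
  have hcomp := rpow_neg_add_mul_le_rpow_neg (u := fun x => -endToEnd D a b β x)
    (u' := fun x => -(gradNormSq D a b β x * (z - endToEnd D a b β x + h x)))
    (k := (D : ℝ) ^ p / 2) hr.le htT (fun x hx => by linarith [hu x hx])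
    (hf.continuousOn_endToEnd.neg.mono fun x hx => ht₀.trans hx.1)
    (fun x hx => (hf.hasDerivWithinAt_endToEnd (ht₀.trans hx.1)).neg.mono
      (Ici_subset_Ici.2 (ht₀.trans hx.1)))
    (fun x hx => ?_)
  · have hstart : 0 < (-endToEnd D a b β t₀) ^ (-r) :=
      rpow_pos_of_pos (by linarith [hu t₀ ⟨le_rfl, htT⟩]) _
    have hend : (-endToEnd D a b β T) ^ (-r) < (2 * κ) ^ (-r) :=
      rpow_lt_rpow_of_neg (by positivity) (lt_neg_of_lt_neg (hu T ⟨htT, le_rfl⟩))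
        (neg_lt_zero.2 hr)
    have hgrowth :
        r * ((D : ℝ) ^ p / 2) * (T - t₀) = (D : ℝ) ^ p * (D : ℝ) ^ p * (2 * κ) ^ (-r) := by
      simp only [T, r]
      field_simp
      ring
    have hDpp : (2 * κ) ^ (-r) ≤ (D : ℝ) ^ p * (D : ℝ) ^ p * (2 * κ) ^ (-r) :=
      le_mul_of_one_le_left (by positivity) (one_le_mul_of_one_le_of_one_le hDp hDp)
    linarith
  · exact neg_le_neg (hf.le_gradNormSq_mul_of_le_neg_two_mul hβ0 hz (ht₀.trans hx.1)
      (hhb x hx.1) (hu x (Ico_subset_Icc_self hx)).le)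

end IsPerturbedMultilayerFlow

theorem stmt_14_general (D : ℕ) (z κ t₀ : ℝ) (h a b β : ℝ → ℝ)
    (hβ0 : β 0 = 0)
    (hode : ∀ t ∈ Ici (0 : ℝ),
      HasDerivWithinAt a
        (b t ^ D * β t * (z - a t * b t ^ D * β t + h t)) (Ici 0) t ∧
      HasDerivWithinAt b
        ((D : ℝ) * a t * b t ^ (D - 1) * β t * (z - a t * b t ^ D * β t + h t)) (Ici 0) t ∧
      HasDerivWithinAt β
        (a t * b t ^ D * (z - a t * b t ^ D * β t + h t)) (Ici 0) t)
    (hz : 0 ≤ z) (ht₀ : 0 ≤ t₀) (hκ : 0 < κ)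
    (hhb : ∀ t, t₀ ≤ t → |h t| ≤ κ) :
    ∀ t : ℝ, t₀ + ((D : ℝ) + 2) / ((D : ℝ) + 1) * (D : ℝ) ^ ((D : ℝ) / ((D : ℝ) + 2)) *
        (2 * κ) ^ (-(2 * (D : ℝ) + 2) / ((D : ℝ) + 2)) ≤ t →
      -(2 * κ) ≤ a t * b t ^ D * β t := by
  have hf : IsPerturbedMultilayerFlow D z h a b β := hode
  intro t ht
  obtain ⟨s, hs, hθs⟩ := hf.exists_neg_two_mul_le_endToEnd hβ0 hz hκ hhb ht₀
  exact hf.neg_two_mul_le_endToEnd_of_le hβ0 hz hκ hhb ht₀ hs.1 hθs (hs.2.trans ht)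

/-- Retracting from the negative for the perturbed multilayer dynamics. -/
theorem stmt_14 (D : ℕ) (lam b0 z κ t₀ : ℝ) (h a b β : ℝ → ℝ)
    (hD : 1 ≤ D) (hlam : 0 < lam) (hb0pos : 0 < b0)
    (hh : ContinuousOn h (Ici 0))
    (ha0 : a 0 = Real.sqrt lam) (hbinit : b 0 = b0) (hβ0 : β 0 = 0)
    (hode : ∀ t ∈ Ici (0 : ℝ),
      HasDerivWithinAt a
        (b t ^ D * β t * (z - a t * b t ^ D * β t + h t)) (Ici 0) t ∧
      HasDerivWithinAt b
        ((D : ℝ) * a t * b t ^ (D - 1) * β t * (z - a t * b t ^ D * β t + h t)) (Ici 0) t ∧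
      HasDerivWithinAt β
        (a t * b t ^ D * (z - a t * b t ^ D * β t + h t)) (Ici 0) t)
    (hz : 0 ≤ z) (ht₀ : 0 ≤ t₀) (hκ : 0 < κ)
    (hhb : ∀ t, t₀ ≤ t → |h t| ≤ κ) :
    ∀ t : ℝ, t₀ + ((D : ℝ) + 2) / ((D : ℝ) + 1) * (D : ℝ) ^ ((D : ℝ) / ((D : ℝ) + 2)) *
        (2 * κ) ^ (-(2 * (D : ℝ) + 2) / ((D : ℝ) + 2)) ≤ t →
      -(2 * κ) ≤ a t * b t ^ D * β t :=
  stmt_14_general D z κ t₀ h a b β hβ0 hode hz ht₀ hκ hhb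
end

section
/- Approximation time near z for the perturbed multilayer dynamics: assume z ≥ 0, let t₀ ≥ 0, suppose |h(t)| ≤ κ for all t ≥ t₀ for some κ > 0, and suppose z/4 ≤ θ(t₀) ≤ 3z. Then for any δ > 0, |z − θ(t)| ≤ κ + δ for all t ≥ t₀ + 4^{(2D+2)/(D+2)} · D^{D/(D+2)} · z^{−(2D+2)/(D+2)} · ln⁺((|z − θ(t₀)| − κ)/δ). -/
/-!
Along the flow the gap `g = z - θ` satisfies `g' = -Q (g + h)` with
`Q = (b^D β)² + (D a b^(D-1) β)² + (a b^D)² ≥ (a b^D)²` (`outputGain`). The conserved quantities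
`a² - β²` and `b² - D a²`, together with `β(0) = 0`, give `a² ≥ β²` and `b² ≥ D β²`, hence
`(a b^D)^(2(D+2)) ≥ D^D θ^(2D+2)`: while `θ ≥ z/4` the gain `Q` is at least
`r = (z/4)^((2D+2)/(D+2)) D^(D/(D+2))` (`decayRate`). Since `|h| ≤ κ`, outside the band `|g| ≤ κ`
the flow always moves `g` towards the band, so `g` never exceeds `g(t₀) ≤ 3z/4` there, `θ ≥ z/4`
holds whenever it matters, and comparison gives `|g(t)| ≤ κ + (|g(t₀)| - κ)⁺ e^(-r(t - t₀))`.
The waiting time in the statement makes the last term at most `δ`, because the prefactor times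
`r` equals `D^(2D/(D+2)) ≥ 1`.
-/

open Real Set

theorem le_max_of_hasDerivWithinAt_nonpos_above {f f' : ℝ → ℝ} {a b c : ℝ} (hab : a ≤ b)
    (hf : ContinuousOn f (Icc a b)) (hf' : ∀ x ∈ Ico a b, HasDerivWithinAt f (f' x) (Ici x) x)
    (hneg : ∀ x ∈ Ico a b, c < f x → f' x ≤ 0) :
    f b ≤ max (f a) c := by
  refine le_of_forall_pos_le_add fun ε hε => ?_
  set η := ε / (b - a + 1)
  have hη : 0 < η := div_pos hε (by linarith)
  have hfence : ∀ x, HasDerivAt (fun y => max (f a) c + η * (y - a + 1)) η x := fun x =>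
    ((((hasDerivAt_id x).sub_const a).add_const 1).const_mul η).const_add _ |>.congr_deriv
      (by ring)
  have hstart : f a ≤ max (f a) c + η * (a - a + 1) := by
    linarith [le_max_left (f a) c]
  have key := image_le_of_deriv_right_lt_deriv_boundary hf hf' hstart hfence
    (fun x hx hfx => (hneg x hx (by nlinarith [le_max_right (f a) c, hx.1])).trans_lt hη)
    ⟨hab, le_rfl⟩
  have : η * (b - a + 1) = ε := div_mul_cancel₀ ε (by linarith)
  linarith

theorem sub_le_max_mul_exp_of_hasDerivWithinAt {f f' : ℝ → ℝ} {a b c r : ℝ} (hab : a ≤ b)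
    (hf : ContinuousOn f (Icc a b)) (hf' : ∀ x ∈ Ico a b, HasDerivWithinAt f (f' x) (Ici x) x)
    (hdecay : ∀ x ∈ Ico a b, c < f x → f' x ≤ -(r * (f x - c))) :
    f b - c ≤ max (f a - c) 0 * exp (-(r * (b - a))) := by
  set u : ℝ → ℝ := fun x => exp (r * (x - a)) * (f x - c)
  have hu : ContinuousOn u (Icc a b) :=
    (by fun_prop : Continuous fun x => exp (r * (x - a))).continuousOn.mul
      (hf.sub continuousOn_const)
  have hu' : ∀ x ∈ Ico a b, HasDerivWithinAt u
      (exp (r * (x - a)) * (f' x + r * (f x - c))) (Ici x) x := fun x hx =>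
    ((((hasDerivAt_id x).sub_const a).const_mul r).exp.hasDerivWithinAt.mul
      ((hf' x hx).sub_const c)).congr_deriv (by simp only [id_eq, mul_one]; ring)
  have hub := le_max_of_hasDerivWithinAt_nonpos_above (c := 0) hab hu hu' fun x hx hux =>
    mul_nonpos_of_nonneg_of_nonpos (exp_pos _).le (by
      have := hdecay x hx (by simp only [u] at hux; nlinarith [exp_pos (r * (x - a))])
      linarith)
  simp only [u, sub_self, mul_zero, exp_zero, one_mul] at hub
  calc f b - c = exp (-(r * (b - a))) * (exp (r * (b - a)) * (f b - c)) := by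
        rw [← mul_assoc, ← exp_add]; simp
    _ ≤ exp (-(r * (b - a))) * max (f a - c) 0 := mul_le_mul_of_nonneg_left hub (exp_pos _).le
    _ = _ := mul_comm _ _

theorem abs_le_of_relaxation {g Q h : ℝ → ℝ} {t₀ κ r σ : ℝ}
    (hg : ∀ x ∈ Ici t₀, HasDerivWithinAt g (-(Q x * (g x + h x))) (Ici t₀) x)
    (hQ : ∀ x ∈ Ici t₀, 0 ≤ Q x) (hh : ∀ x ∈ Ici t₀, |h x| ≤ κ)
    (hrate : ∀ x ∈ Ici t₀, g x ≤ σ → r ≤ Q x) (hg₀ : g t₀ ≤ σ) (hκσ : -κ ≤ σ)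
    {t : ℝ} (ht : t₀ ≤ t) :
    |g t| ≤ κ + max (|g t₀| - κ) 0 * exp (-(r * (t - t₀))) := by
  have hcont : ∀ s, ContinuousOn g (Icc t₀ s) := fun s x hx =>
    (hg x hx.1).continuousWithinAt.mono Icc_subset_Ici_self
  have hderiv : ∀ s, ∀ x ∈ Ico t₀ s,
      HasDerivWithinAt g (-(Q x * (g x + h x))) (Ici x) x := fun s x hx =>
    (hg x hx.1).mono (Ici_subset_Ici.mpr hx.1)
  have htrap : ∀ x ∈ Ici t₀, κ < g x → g x ≤ g t₀ := by
    intro x hx hκx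
    have hmax := le_max_of_hasDerivWithinAt_nonpos_above (c := κ) hx (hcont x) (hderiv x)
      fun y hy hκy => by
        have := (abs_le.mp (hh y hy.1)).1
        have := hQ y hy.1
        nlinarith
    exact (le_max_iff.mp hmax).resolve_right (not_le.mpr hκx)
  have hupper := sub_le_max_mul_exp_of_hasDerivWithinAt (c := κ) (r := r) ht (hcont t) (hderiv t)
    fun x hx hκx => by
      have := hrate x hx.1 ((htrap x hx.1 hκx).trans hg₀)
      have := (abs_le.mp (hh x hx.1)).1
      have := hQ x hx.1
      nlinarith
  have hlower := sub_le_max_mul_exp_of_hasDerivWithinAt (f := fun x => -g x) (c := κ) (r := r) ht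
    (hcont t).neg (fun x hx => (hderiv t x hx).neg) fun x hx hκx => by
      have := hrate x hx.1 (by linarith)
      have := (abs_le.mp (hh x hx.1)).2
      have := hQ x hx.1
      nlinarith
  have hexp := (exp_pos (-(r * (t - t₀)))).le
  have h₁ := mul_le_mul_of_nonneg_right
    (max_le_max_right 0 (sub_le_sub_right (le_abs_self (g t₀)) κ)) hexp
  have h₂ := mul_le_mul_of_nonneg_right
    (max_le_max_right 0 (sub_le_sub_right (neg_le_abs (g t₀)) κ)) hexp
  rw [abs_le]
  constructor <;> linarith

theorem eq_of_hasDerivWithinAt_zero {f : ℝ → ℝ} {t₀ : ℝ}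
    (hf : ∀ t ∈ Ici t₀, HasDerivWithinAt f 0 (Ici t₀) t) {t : ℝ} (ht : t₀ ≤ t) : f t = f t₀ :=
  constant_of_has_deriv_right_zero
    (fun x hx => (hf x hx.1).continuousWithinAt.mono Icc_subset_Ici_self)
    (fun x hx => (hf x hx.1).mono (Ici_subset_Ici.mpr hx.1)) t ⟨ht, le_rfl⟩

theorem rpow_div_natCast_pow {x : ℝ} (hx : 0 ≤ x) (m n : ℕ) (hn : n ≠ 0) :
    (x ^ ((m : ℝ) / n)) ^ n = x ^ m := by
  rw [← rpow_mul_natCast hx, div_mul_cancel₀ _ (by exact_mod_cast hn), rpow_natCast]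

theorem rpow_le_of_sq_eq_mul (n : ℕ) {X β θ c : ℝ} (hc : 0 ≤ c) (hcθ : c ≤ θ)
    (hθ : θ ^ 2 = X * β ^ 2) (hX : β ^ 2 * (n * β ^ 2) ^ n ≤ X) :
    c ^ ((2 * (n : ℝ) + 2) / ((n : ℝ) + 2)) * (n : ℝ) ^ ((n : ℝ) / ((n : ℝ) + 2)) ≤ X := by
  have hX0 : 0 ≤ X := le_trans (by positivity) hX
  have hpow :
      (c ^ ((2 * (n : ℝ) + 2) / ((n : ℝ) + 2)) * (n : ℝ) ^ ((n : ℝ) / ((n : ℝ) + 2))) ^ (n + 2)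
        = c ^ (2 * n + 2) * (n : ℝ) ^ n := by
    have h₁ := rpow_div_natCast_pow hc (2 * n + 2) (n + 2) (by omega)
    have h₂ := rpow_div_natCast_pow (Nat.cast_nonneg (α := ℝ) n) n (n + 2) (by omega)
    push_cast at h₁ h₂
    rw [mul_pow, h₁, h₂]
  refine le_of_pow_le_pow_left₀ (n := n + 2) (by omega) hX0 ?_
  calc _ = c ^ (2 * n + 2) * (n : ℝ) ^ n := hpow
    _ ≤ θ ^ (2 * n + 2) * (n : ℝ) ^ n := by gcongr
    _ = X ^ (n + 1) * (β ^ 2 * (n * β ^ 2) ^ n) := by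
        rw [show θ ^ (2 * n + 2) = (θ ^ 2) ^ (n + 1) by ring, hθ]
        ring
    _ ≤ X ^ (n + 1) * X := by gcongr
    _ = X ^ (n + 2) := by ring

theorem one_le_natCast_rpow (n : ℕ) : 1 ≤ (n : ℝ) ^ ((n : ℝ) / ((n : ℝ) + 2)) := by
  rcases n.eq_zero_or_pos with rfl | hn
  · simp
  · exact one_le_rpow (by exact_mod_cast hn) (by positivity)

noncomputable def decayRate (D : ℕ) (z : ℝ) : ℝ :=
  (z / 4) ^ ((2 * (D : ℝ) + 2) / ((D : ℝ) + 2)) * (D : ℝ) ^ ((D : ℝ) / ((D : ℝ) + 2))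

theorem one_le_mul_decayRate (n : ℕ) {z : ℝ} (hz : 0 < z) :
    1 ≤ (4 : ℝ) ^ ((2 * (n : ℝ) + 2) / ((n : ℝ) + 2)) * (n : ℝ) ^ ((n : ℝ) / ((n : ℝ) + 2)) *
        z ^ (-(2 * (n : ℝ) + 2) / ((n : ℝ) + 2)) * decayRate n z := by
  unfold decayRate
  set p := (2 * (n : ℝ) + 2) / ((n : ℝ) + 2)
  have hneg : -(2 * (n : ℝ) + 2) / ((n : ℝ) + 2) = -p := neg_div _ _
  rw [hneg, rpow_neg hz.le, div_rpow hz.le (by norm_num)]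
  have : (0 : ℝ) < 4 ^ p := by positivity
  have : 0 < z ^ p := by positivity
  have h1 := one_le_natCast_rpow n
  calc (1 : ℝ) ≤ (n : ℝ) ^ ((n : ℝ) / ((n : ℝ) + 2)) * (n : ℝ) ^ ((n : ℝ) / ((n : ℝ) + 2)) :=
        one_le_mul_of_one_le_of_one_le h1 h1
    _ = _ := by field_simp

theorem max_mul_exp_neg_le {m δ ρ : ℝ} (hδ : 0 < δ) (hρ : 0 ≤ ρ)
    (hlog : δ < m → log (m / δ) ≤ ρ) : max m 0 * exp (-ρ) ≤ δ := by
  rcases le_or_gt m δ with hm | hm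
  · calc max m 0 * exp (-ρ) ≤ δ * 1 :=
          mul_le_mul (max_le hm hδ.le) (exp_le_one_iff.mpr (by linarith)) (exp_pos _).le hδ.le
      _ = δ := mul_one δ
  · have hm0 : 0 < m := hδ.trans hm
    calc max m 0 * exp (-ρ) ≤ m * exp (-log (m / δ)) := by
          rw [max_eq_left hm0.le]; gcongr; exact hlog hm
      _ = δ := by rw [exp_neg, exp_log (div_pos hm0 hδ)]; field_simp

def MultilayerODE (D : ℕ) (z : ℝ) (h a b β : ℝ → ℝ) : Prop :=
  ∀ t ∈ Ici (0 : ℝ),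
    HasDerivWithinAt a (b t ^ D * β t * (z - a t * b t ^ D * β t + h t)) (Ici 0) t ∧
    HasDerivWithinAt b
      ((D : ℝ) * a t * b t ^ (D - 1) * β t * (z - a t * b t ^ D * β t + h t)) (Ici 0) t ∧
    HasDerivWithinAt β (a t * b t ^ D * (z - a t * b t ^ D * β t + h t)) (Ici 0) t

def outputGain (D : ℕ) (a b β : ℝ → ℝ) (t : ℝ) : ℝ :=
  (b t ^ D * β t) ^ 2 + ((D : ℝ) * a t * b t ^ (D - 1) * β t) ^ 2 + (a t * b t ^ D) ^ 2

theorem outputGain_nonneg (D : ℕ) (a b β : ℝ → ℝ) (t : ℝ) : 0 ≤ outputGain D a b β t := by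
  unfold outputGain; positivity

namespace MultilayerODE

variable {D : ℕ} {z : ℝ} {h a b β : ℝ → ℝ} {t : ℝ}

theorem sq_sub_sq_eq (hode : MultilayerODE D z h a b β) (ht : 0 ≤ t) :
    a t ^ 2 - β t ^ 2 = a 0 ^ 2 - β 0 ^ 2 :=
  eq_of_hasDerivWithinAt_zero (f := fun s => a s ^ 2 - β s ^ 2) (fun s hs => by
    obtain ⟨ha, -, hβ⟩ := hode s hs
    exact ((ha.pow 2).sub (hβ.pow 2)).congr_deriv
      (by simp only [Nat.cast_ofNat, Nat.add_one_sub_one, pow_one]; ring)) ht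

theorem sq_sub_mul_sq_eq (hode : MultilayerODE D z h a b β) (ht : 0 ≤ t) :
    b t ^ 2 - D * a t ^ 2 = b 0 ^ 2 - D * a 0 ^ 2 :=
  eq_of_hasDerivWithinAt_zero (f := fun s => b s ^ 2 - D * a s ^ 2) (fun s hs => by
    obtain ⟨ha, hb, -⟩ := hode s hs
    refine ((hb.pow 2).sub ((ha.pow 2).const_mul (D : ℝ))).congr_deriv ?_
    -- `b * b ^ (D - 1) = b ^ D` fails for `D = 0`, where the factor `D` kills both terms instead
    rcases D with _ | k
    · simp
    · simp only [Nat.cast_ofNat, Nat.add_one_sub_one, pow_one, Nat.cast_add, Nat.cast_one,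
        add_tsub_cancel_right]
      ring) ht

theorem hasDerivWithinAt_output (hode : MultilayerODE D z h a b β) (ht : 0 ≤ t) :
    HasDerivWithinAt (fun s => a s * b s ^ D * β s)
      (outputGain D a b β t * (z - a t * b t ^ D * β t + h t)) (Ici 0) t := by
  obtain ⟨ha, hb, hβ⟩ := hode t ht
  exact ((ha.mul (hb.pow D)).mul hβ).congr_deriv
    (by simp only [outputGain, Pi.pow_apply, Pi.mul_apply]; ring)

theorem rate_le_outputGain (hode : MultilayerODE D z h a b β) (hβ0 : β 0 = 0) (ht : 0 ≤ t)
    (hz : 0 ≤ z) (hθ : z / 4 ≤ a t * b t ^ D * β t) :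
    decayRate D z ≤ outputGain D a b β t := by
  have ha := hode.sq_sub_sq_eq ht
  have hb := hode.sq_sub_mul_sq_eq ht
  rw [hβ0] at ha
  have hβa : β t ^ 2 ≤ a t ^ 2 := by nlinarith [sq_nonneg (a 0)]
  have hβb : (D : ℝ) * β t ^ 2 ≤ b t ^ 2 := by nlinarith [sq_nonneg (b 0)]
  have hX : β t ^ 2 * (D * β t ^ 2) ^ D ≤ (a t * b t ^ D) ^ 2 := by
    calc _ ≤ a t ^ 2 * (b t ^ 2) ^ D := by gcongr
      _ = _ := by ring
  calc _ ≤ (a t * b t ^ D) ^ 2 :=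
        rpow_le_of_sq_eq_mul D (by linarith) hθ (by ring) hX
    _ ≤ outputGain D a b β t := by
        unfold outputGain
        nlinarith [sq_nonneg (b t ^ D * β t), sq_nonneg ((D : ℝ) * a t * b t ^ (D - 1) * β t)]

end MultilayerODE

theorem stmt_15_general (D : ℕ) (z κ t₀ : ℝ) (h a b β : ℝ → ℝ)
    (hβ0 : β 0 = 0)
    (hode : ∀ t ∈ Ici (0 : ℝ),
      HasDerivWithinAt a
        (b t ^ D * β t * (z - a t * b t ^ D * β t + h t)) (Ici 0) t ∧
      HasDerivWithinAt b
        ((D : ℝ) * a t * b t ^ (D - 1) * β t * (z - a t * b t ^ D * β t + h t)) (Ici 0) t ∧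
      HasDerivWithinAt β
        (a t * b t ^ D * (z - a t * b t ^ D * β t + h t)) (Ici 0) t)
    (ht₀ : 0 ≤ t₀)
    (hhb : ∀ t, t₀ ≤ t → |h t| ≤ κ)
    (hlow : z / 4 ≤ a t₀ * b t₀ ^ D * β t₀)
    (hhigh : a t₀ * b t₀ ^ D * β t₀ ≤ 3 * z) :
    ∀ δ : ℝ, 0 < δ →
      ∀ t : ℝ, t₀ + (4 : ℝ) ^ ((2 * (D : ℝ) + 2) / ((D : ℝ) + 2)) *
          (D : ℝ) ^ ((D : ℝ) / ((D : ℝ) + 2)) *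
          z ^ (-(2 * (D : ℝ) + 2) / ((D : ℝ) + 2)) *
          max (Real.log ((|z - a t₀ * b t₀ ^ D * β t₀| - κ) / δ)) 0 ≤ t →
        |z - a t * b t ^ D * β t| ≤ κ + δ := by
  intro δ hδ t ht
  have hz : 0 ≤ z := by linarith
  have hκ : 0 ≤ κ := (abs_nonneg _).trans (hhb t₀ le_rfl)
  set C := (4 : ℝ) ^ ((2 * (D : ℝ) + 2) / ((D : ℝ) + 2)) * (D : ℝ) ^ ((D : ℝ) / ((D : ℝ) + 2)) *
    z ^ (-(2 * (D : ℝ) + 2) / ((D : ℝ) + 2))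
  set L := max (log ((|z - a t₀ * b t₀ ^ D * β t₀| - κ) / δ)) 0
  have hr : 0 ≤ decayRate D z := by unfold decayRate; positivity
  have htt₀ : t₀ ≤ t := by
    nlinarith [mul_nonneg (by positivity : 0 ≤ C) (le_max_right _ _ : 0 ≤ L)]
  have hdecay := abs_le_of_relaxation (g := fun s => z - a s * b s ^ D * β s)
    (Q := outputGain D a b β) (σ := 3 * z / 4)
    (fun x hx => (((MultilayerODE.hasDerivWithinAt_output hode (ht₀.trans hx)).const_sub z).mono
      (Ici_subset_Ici.mpr ht₀)).congr_deriv (by ring))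
    (fun x _ => outputGain_nonneg D a b β x) hhb
    (fun x hx _ => MultilayerODE.rate_le_outputGain hode hβ0 (ht₀.trans hx) hz (by linarith))
    (by linarith) (by linarith) htt₀
  refine hdecay.trans (add_le_add le_rfl (max_mul_exp_neg_le hδ
    (mul_nonneg hr (sub_nonneg.mpr htt₀)) fun hm => ?_))
  have hz₀ : 0 < z := by
    refine hz.lt_of_ne fun hz₀ => ?_
    have hθ₀ : a t₀ * b t₀ ^ D * β t₀ = 0 := by subst hz₀; linarith
    rw [hθ₀, ← hz₀, sub_zero, abs_zero] at hm
    linarith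
  calc log ((|z - a t₀ * b t₀ ^ D * β t₀| - κ) / δ) ≤ L := le_max_left _ _
    _ ≤ C * decayRate D z * L :=
        le_mul_of_one_le_left (le_max_right _ _) (one_le_mul_decayRate D hz₀)
    _ = decayRate D z * (C * L) := by ring
    _ ≤ decayRate D z * (t - t₀) := by gcongr; linarith

/-- Approximation time near z for the perturbed multilayer dynamics. -/
theorem stmt_15 (D : ℕ) (lam b0 z κ t₀ : ℝ) (h a b β : ℝ → ℝ)
    (hD : 1 ≤ D) (hlam : 0 < lam) (hb0pos : 0 < b0)
    (hh : ContinuousOn h (Ici 0))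
    (ha0 : a 0 = Real.sqrt lam) (hbinit : b 0 = b0) (hβ0 : β 0 = 0)
    (hode : ∀ t ∈ Ici (0 : ℝ),
      HasDerivWithinAt a
        (b t ^ D * β t * (z - a t * b t ^ D * β t + h t)) (Ici 0) t ∧
      HasDerivWithinAt b
        ((D : ℝ) * a t * b t ^ (D - 1) * β t * (z - a t * b t ^ D * β t + h t)) (Ici 0) t ∧
      HasDerivWithinAt β
        (a t * b t ^ D * (z - a t * b t ^ D * β t + h t)) (Ici 0) t)
    (hz : 0 ≤ z) (ht₀ : 0 ≤ t₀) (hκ : 0 < κ)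
    (hhb : ∀ t, t₀ ≤ t → |h t| ≤ κ)
    (hlow : z / 4 ≤ a t₀ * b t₀ ^ D * β t₀)
    (hhigh : a t₀ * b t₀ ^ D * β t₀ ≤ 3 * z) :
    ∀ δ : ℝ, 0 < δ →
      ∀ t : ℝ, t₀ + (4 : ℝ) ^ ((2 * (D : ℝ) + 2) / ((D : ℝ) + 2)) *
          (D : ℝ) ^ ((D : ℝ) / ((D : ℝ) + 2)) *
          z ^ (-(2 * (D : ℝ) + 2) / ((D : ℝ) + 2)) *
          max (Real.log ((|z - a t₀ * b t₀ ^ D * β t₀| - κ) / δ)) 0 ≤ t →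
        |z - a t * b t ^ D * β t| ≤ κ + δ :=
  stmt_15_general D z κ t₀ h a b β hβ0 hode ht₀ hhb hlow hhigh
end
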